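/- arXiv:1902.00188 — 8 statements merged into one kernel-verified Lean document; each statement's English description precedes it below -/
import Mathlib

section
/- Let K be a non-degenerate continuum (nonempty compact connected metric space). Then for every point x ∈ K there exists a nested decreasing sequence (H_i)_{i∈ℕ} of non-degenerate subcontinua of K such that ⋂_{i∈ℕ} H_i = {x}. -/
open Set Filter Topology

/-- **Boundary bumping lemma.** In a connected compact metric (Hausdorff) space, the
connected component of a point `x` in a proper closed subset `E` meets the frontier of `E`. -/
lemma bump {K : Type*} [MetricSpace K] [CompactSpace K] [ConnectedSpace K]
    {E : Set K} (hE : IsClosed E) (hEne : E ≠ univ) {x : K} (hx : x ∈ E) :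
    (connectedComponentIn E x ∩ frontier E).Nonempty := by
  by_contra hcon
  rw [not_nonempty_iff_eq_empty] at hcon
  haveI : CompactSpace E := isCompact_iff_compactSpace.mp hE.isCompact
  set x' : E := ⟨x, hx⟩
  -- the preimage of the frontier in the subspace `E`
  set F : Set E := (Subtype.val) ⁻¹' (frontier E) with hF
  have hFc : IsCompact F :=
    (isClosed_frontier.preimage continuous_subtype_val).isCompact
  -- the component in the subspace is the intersection of clopen neighborhoods
  have hcomp := connectedComponent_eq_iInter_isClopen x'
  -- `F` is disjoint from the component
  have hdisj : F ∩ ⋂ s : { s : Set E // IsClopen s ∧ x' ∈ s }, (s : Set E) = ∅ := by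
    rw [← hcomp]
    rw [eq_empty_iff_forall_notMem]
    rintro z ⟨hzF, hzC⟩
    have : (z : K) ∈ connectedComponentIn E x ∩ frontier E := by
      refine ⟨?_, hzF⟩
      rw [connectedComponentIn_eq_image hx]
      exact ⟨z, hzC, rfl⟩
    rw [hcon] at this
    exact this
  -- extract a finite subfamily, hence a single clopen set `s` disjoint from `F`
  obtain ⟨u, hu⟩ : ∃ u : Finset { s : Set E // IsClopen s ∧ x' ∈ s },
      ¬ (F ∩ ⋂ s ∈ u, (s : Set E)).Nonempty := by
    by_contra h
    push_neg at h
    have := hFc.inter_iInter_nonempty (fun s : { s : Set E // IsClopen s ∧ x' ∈ s } => s)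
      (fun s => s.2.1.1) h
    rw [hdisj] at this
    exact this.ne_empty rfl
  set s : Set E := ⋂ t ∈ u, (t : Set E) with hs
  have hs_clopen : IsClopen s := isClopen_biInter_finset fun t _ => t.2.1
  have hxs : x' ∈ s := mem_iInter₂.2 fun t _ => t.2.2
  have hsF : s ∩ F = ∅ := by
    rw [← not_nonempty_iff_eq_empty]
    intro ⟨z, hz1, hz2⟩
    exact hu ⟨z, hz2, hz1⟩
  -- the image `U` of `s` in `K`
  set U : Set K := Subtype.val '' s with hU
  have hUE : U ⊆ E := by rintro _ ⟨z, _, rfl⟩; exact z.2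
  have hU_frontier : U ∩ frontier E = ∅ := by
    rw [← not_nonempty_iff_eq_empty]
    rintro ⟨_, ⟨z, hz, rfl⟩, hfz⟩
    exact (eq_empty_iff_forall_notMem.mp hsF z) ⟨hz, hfz⟩
  have hU_closed : IsClosed U :=
    (hs_clopen.1.isCompact.image continuous_subtype_val).isClosed
  have hU_open : IsOpen U := by
    obtain ⟨V, hV, hVs⟩ := isOpen_induced_iff.mp hs_clopen.2
    have himg : U = V ∩ E := by
      rw [hU, ← hVs, Subtype.image_preimage_coe, inter_comm]
    have hUi : U ⊆ interior E := by
      intro z hz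
      have hzE : z ∈ E := hUE hz
      have : z ∉ frontier E := fun hf =>
        (eq_empty_iff_forall_notMem.mp hU_frontier z) ⟨hz, hf⟩
      rw [hE.frontier_eq] at this
      simpa [hzE] using this
    have : U = V ∩ interior E := by
      apply Subset.antisymm
      · intro z hz
        exact ⟨(himg ▸ hz).1, hUi hz⟩
      · intro z hz
        rw [himg]; exact ⟨hz.1, interior_subset hz.2⟩
    rw [this]
    exact hV.inter isOpen_interior
  have hUne : U.Nonempty := ⟨x, x', hxs, rfl⟩
  have : U = univ := by
    rcases isClopen_iff.mp ⟨hU_closed, hU_open⟩ with h | h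
    · exact absurd h hUne.ne_empty
    · exact h
  exact hEne (eq_univ_of_univ_subset (this ▸ hUE))

/-- Let `K` be a non-degenerate continuum (nonempty compact connected
metric space).  Then for every point `x ∈ K` there exists a nested decreasing sequence
`(H i)` of non-degenerate subcontinua of `K` whose intersection is `{x}`. -/
theorem stmt0 {K : Type*} [MetricSpace K] [CompactSpace K] [ConnectedSpace K]
    [Nontrivial K] (x : K) :
    ∃ H : ℕ → Set K,
      (∀ i, IsCompact (H i) ∧ IsConnected (H i) ∧ ¬ (H i).Subsingleton) ∧
      (∀ i, H (i + 1) ⊆ H i) ∧ (⋂ i, H i) = {x} := by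
  obtain ⟨y, hy⟩ := exists_ne x
  set R := dist y x with hR
  have hR0 : 0 < R := dist_pos.mpr hy
  set r : ℕ → ℝ := fun i => R / 2 ^ (i + 1) with hr
  have hr0 : ∀ i, 0 < r i := fun i => by positivity
  have hrR : ∀ i, r i < R := fun i => by
    have h1 : (1 : ℝ) < 2 ^ (i + 1) := one_lt_pow₀ one_lt_two (Nat.succ_ne_zero i)
    exact div_lt_self hR0 h1
  have hball_ne : ∀ i, Metric.closedBall x (r i) ≠ univ := fun i => by
    intro h
    have : y ∈ Metric.closedBall x (r i) := h ▸ mem_univ y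
    rw [Metric.mem_closedBall] at this
    exact absurd (hR ▸ this) (not_le.mpr (hrR i))
  have hxball : ∀ i, x ∈ Metric.closedBall x (r i) :=
    fun i => Metric.mem_closedBall_self (hr0 i).le
  set H : ℕ → Set K := fun i => connectedComponentIn (Metric.closedBall x (r i)) x with hH
  have hxH : ∀ i, x ∈ H i := fun i => mem_connectedComponentIn (hxball i)
  have hHball : ∀ i, H i ⊆ Metric.closedBall x (r i) :=
    fun i => connectedComponentIn_subset _ _
  refine ⟨H, fun i => ⟨?_, ?_, ?_⟩, ?_, ?_⟩
  · -- compact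
    have hcl : IsClosed (H i) := by
      show IsClosed (connectedComponentIn (Metric.closedBall x (r i)) x)
      rw [connectedComponentIn_eq_image (hxball i)]
      haveI : CompactSpace (Metric.closedBall x (r i)) :=
        isCompact_iff_compactSpace.mp (isCompact_closedBall _ _)
      exact (isClosed_connectedComponent.isCompact.image continuous_subtype_val).isClosed
    exact hcl.isCompact
  · exact isConnected_connectedComponentIn_iff.mpr (hxball i)
  · -- not subsingleton
    obtain ⟨z, hz1, hz2⟩ := bump Metric.isClosed_closedBall (hball_ne i) (hxball i)
    intro hsub
    have hzx : z = x := hsub hz1 (hxH i)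
    have : z ∈ Metric.sphere x (r i) := Metric.frontier_closedBall_subset_sphere hz2
    rw [hzx, Metric.mem_sphere, dist_self] at this
    exact absurd this.symm (ne_of_gt (hr0 i))
  · -- nested
    intro i
    apply IsPreconnected.subset_connectedComponentIn isPreconnected_connectedComponentIn (hxH _)
    refine (hHball (i + 1)).trans (Metric.closedBall_subset_closedBall ?_)
    apply div_le_div_of_nonneg_left hR0.le (by positivity)
    exact_mod_cast Nat.pow_le_pow_right (by norm_num) (by omega)
  · -- intersection is {x}
    apply Subset.antisymm
    · intro z hz
      rw [mem_iInter] at hz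
      have hd : ∀ i, dist z x ≤ r i := fun i => (hHball i) (hz i)
      have hlim : Tendsto r atTop (𝓝 0) := by
        rw [hr]
        simpa using tendsto_const_nhds.div_atTop
          (tendsto_pow_atTop_atTop_of_one_lt (by norm_num : (1:ℝ) < 2) |>.comp
            (tendsto_add_atTop_nat 1))
      have : dist z x ≤ 0 := ge_of_tendsto' hlim hd
      rw [mem_singleton_iff, ← dist_le_zero]
      exact this
    · intro z hz
      rw [mem_singleton_iff] at hz
      subst hz
      exact mem_iInter.mpr hxH
end

section
/- Let K be a non-degenerate chainable continuum and let x ∈ K be an endpoint of K. Then x is not contained in any non-degenerate arc of K if and only if there exists a nested decreasing sequence (H_i)_{i∈ℕ} of non-degenerate subcontinua of K with ⋂_{i∈ℕ} H_i = {x} such that H_i is not arc-connected for all sufficiently large i. -/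
/-!
If `x` lies on no arc, let `H n` be the component of `x` in the closed ball `B(x, rₙ)`, with
`rₙ → 0`. Boundary bumping makes every `H n` non-degenerate, and none of them is arc-connected,
since an arc of `H n` from `x` to another point would be an arc through `x`.

Conversely, let `x` lie on an arc `A`, and pick `a ∈ A` other than `x`. Some `H i` misses `a`
and is not arc-connected. Since `x` is an endpoint, `A` and `H i` are comparable, so `H i ⊆ A`;
but a connected subset of an arc is arc-connected.
-/

open Set Filter Topology

/-- A subset of a topological space is an arc if it is the image of `[0,1]` under a
topological embedding.  (In particular every arc is non-degenerate.) -/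
def IsArc {Z : Type*} [TopologicalSpace Z] (A : Set Z) : Prop :=
  ∃ f : Set.Icc (0:ℝ) 1 → Z, Topology.IsEmbedding f ∧ Set.range f = A

/-- A point `x` of a (chainable) continuum is an endpoint if for any two subcontinua
`A`, `B` containing `x`, either `A ⊆ B` or `B ⊆ A`. -/
def IsEndpointPt {Z : Type*} [TopologicalSpace Z] (x : Z) : Prop :=
  ∀ A B : Set Z, IsCompact A → IsConnected A → IsCompact B → IsConnected B →
    x ∈ A → x ∈ B → A ⊆ B ∨ B ⊆ A

/-- A set is arc-connected if any two distinct points of it are joined by an arc inside it. -/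
def ArcConnectedSet {Z : Type*} [TopologicalSpace Z] (S : Set Z) : Prop :=
  ∀ a ∈ S, ∀ b ∈ S, a ≠ b → ∃ A : Set Z, IsArc A ∧ A ⊆ S ∧ a ∈ A ∧ b ∈ A

section BoundaryBumping

variable {X : Type*} [TopologicalSpace X]

theorem IsClosed.connectedComponentIn {F : Set X} (hF : IsClosed F) (x : X) :
    IsClosed (connectedComponentIn F x) := by
  by_cases hx : x ∈ F
  · refine isClosed_of_closure_subset ?_
    exact isPreconnected_connectedComponentIn.closure.subset_connectedComponentIn
      (subset_closure (mem_connectedComponentIn hx))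
      (closure_minimal (connectedComponentIn_subset F x) hF)
  · rw [connectedComponentIn_eq_empty hx]
    exact isClosed_empty

theorem exists_isClopen_of_connectedComponent_subset [T2Space X] [CompactSpace X] {x : X}
    {U : Set X} (hU : IsOpen U) (h : connectedComponent x ⊆ U) :
    ∃ V, IsClopen V ∧ x ∈ V ∧ V ⊆ U := by
  rw [connectedComponent_eq_iInter_isClopen, ← disjoint_compl_left_iff_subset,
    disjoint_iff_inter_eq_empty] at h
  obtain ⟨t, ht⟩ := hU.isClosed_compl.isCompact.elim_finite_subfamily_closed
    (fun s : {s : Set X // IsClopen s ∧ x ∈ s} ↦ (s : Set X)) (fun s ↦ s.2.1.isClosed) h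
  refine ⟨⋂ s ∈ t, s, isClopen_biInter_finset fun s _ ↦ s.2.1,
    mem_iInter₂.2 fun s _ ↦ s.2.2, ?_⟩
  rwa [← disjoint_compl_left_iff_subset, disjoint_iff_inter_eq_empty]

/-- The boundary bumping theorem. -/
theorem connectedComponentIn_not_subset_interior [T2Space X] [CompactSpace X]
    [PreconnectedSpace X] {F : Set X} (hF : IsClosed F) (hF_ne : F ≠ univ) {x : X}
    (hx : x ∈ F) : ¬ connectedComponentIn F x ⊆ interior F := by
  intro hsub
  have : CompactSpace F := isCompact_iff_compactSpace.mp hF.isCompact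
  rw [connectedComponentIn_eq_image hx, image_subset_iff] at hsub
  obtain ⟨V, hV, hxV, hVint⟩ := exists_isClopen_of_connectedComponent_subset
    (isOpen_interior.preimage continuous_subtype_val) hsub
  obtain ⟨O, hO, rfl⟩ := isOpen_induced_iff.mp hV.isOpen
  -- `V` is clopen in `F` and lies in `interior F`, so its image is clopen in `X`.
  have himage : ((↑) : F → X) '' ((↑) ⁻¹' O) = interior F ∩ O := by
    refine Subset.antisymm (subset_inter (image_subset_iff.2 hVint) (image_preimage_subset _ _)) ?_
    rintro y ⟨hyF, hyO⟩
    exact ⟨⟨y, interior_subset hyF⟩, hyO, rfl⟩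
  have hclopen : IsClopen (interior F ∩ O) :=
    ⟨himage ▸ (hV.isClosed.isCompact.image continuous_subtype_val).isClosed,
      isOpen_interior.inter hO⟩
  refine hF_ne (eq_univ_of_univ_subset ?_)
  rw [← hclopen.eq_univ ⟨x, himage ▸ mem_image_of_mem _ hxV⟩]
  exact inter_subset_left.trans interior_subset

theorem nontrivial_connectedComponentIn [T2Space X] [CompactSpace X] [PreconnectedSpace X]
    {F : Set X} (hF : IsClosed F) (hF_ne : F ≠ univ) {x : X} (hx : x ∈ interior F) :
    (connectedComponentIn F x).Nontrivial := by
  obtain ⟨y, hy, hyF⟩ := not_subset.mp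
    (connectedComponentIn_not_subset_interior hF hF_ne (interior_subset hx))
  exact ⟨x, mem_connectedComponentIn (interior_subset hx), y, hy, fun hxy ↦ hyF (hxy ▸ hx)⟩

end BoundaryBumping

theorem exists_antitone_continua_iInter_eq_singleton {K : Type*} [MetricSpace K]
    [CompactSpace K] [ConnectedSpace K] [Nontrivial K] (x : K) :
    ∃ H : ℕ → Set K, (∀ i, IsCompact (H i) ∧ IsConnected (H i) ∧ (H i).Nontrivial) ∧
      Antitone H ∧ ⋂ i, H i = {x} := by
  obtain ⟨z, hz⟩ := exists_ne x
  obtain ⟨δ, hδ, hδz⟩ : ∃ δ, 0 < δ ∧ δ < dist z x :=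
    ⟨dist z x / 2, half_pos (dist_pos.mpr hz), half_lt_self (dist_pos.mpr hz)⟩
  set r : ℕ → ℝ := fun n ↦ δ * (1 / (n + 1))
  have hr_pos : ∀ n, 0 < r n := fun n ↦ by positivity
  have hr_anti : Antitone r := fun m n hmn ↦ by
    have : (m : ℝ) ≤ n := Nat.cast_le.mpr hmn
    dsimp only [r]
    gcongr
  have hr_lim : Tendsto r atTop (𝓝 0) := by
    simpa [r] using tendsto_one_div_add_atTop_nhds_zero_nat.const_mul δ
  have hz_notMem : ∀ n, z ∉ Metric.closedBall x (r n) := fun n hzn ↦ by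
    have : r n ≤ r 0 := hr_anti n.zero_le
    have : r 0 = δ := by simp [r]
    linarith [Metric.mem_closedBall.mp hzn]
  refine ⟨fun n ↦ connectedComponentIn (Metric.closedBall x (r n)) x, fun n ↦ ⟨?_, ?_, ?_⟩,
    fun _ _ hmn ↦ connectedComponentIn_mono x
      (Metric.closedBall_subset_closedBall (hr_anti hmn)), ?_⟩
  · exact (Metric.isClosed_closedBall.connectedComponentIn x).isCompact
  · exact isConnected_connectedComponentIn_iff.mpr (Metric.mem_closedBall_self (hr_pos n).le)
  · exact nontrivial_connectedComponentIn Metric.isClosed_closedBall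
      (ne_univ_iff_exists_notMem _ |>.mpr ⟨z, hz_notMem n⟩)
      (Metric.ball_subset_interior_closedBall (Metric.mem_ball_self (hr_pos n)))
  · refine Subset.antisymm (fun w hw ↦ ?_) (fun w hw ↦ ?_)
    · have hdist : ∀ n, dist w x ≤ r n := fun n ↦
        Metric.mem_closedBall.mp (connectedComponentIn_subset _ x (mem_iInter.mp hw n))
      exact dist_le_zero.mp (ge_of_tendsto' hr_lim hdist)
    · rw [mem_singleton_iff.mp hw]
      exact mem_iInter.mpr fun n ↦
        mem_connectedComponentIn (Metric.mem_closedBall_self (hr_pos n).le)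

section Arcs

variable {Z : Type*} [TopologicalSpace Z]

theorem IsArc.nontrivial {A : Set Z} (hA : IsArc A) : A.Nontrivial := by
  obtain ⟨f, hf, rfl⟩ := hA
  rw [← image_univ]
  exact nontrivial_univ.image hf.injective

theorem isArc_image_Icc [T2Space Z] {f : Icc (0 : ℝ) 1 → Z} (hf : Continuous f)
    (hf_inj : Function.Injective f) {p q : Icc (0 : ℝ) 1} (hpq : p < q) :
    IsArc (f '' Icc p q) := by
  have hsub : Icc (p : ℝ) q ⊆ Icc 0 1 := Icc_subset_Icc p.2.1 q.2.2
  let e := (iccHomeoI (p : ℝ) q hpq).symm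
  refine ⟨f ∘ inclusion hsub ∘ e, ?_, ?_⟩
  · exact (hf.comp ((continuous_inclusion hsub).comp e.continuous)).isClosedEmbedding
      (hf_inj.comp ((inclusion_injective hsub).comp e.injective)) |>.isEmbedding
  · rw [range_comp, range_comp, e.range_coe, image_univ, range_inclusion]
    rfl

theorem arcConnectedSet_of_subset_range [T2Space Z] {f : Icc (0 : ℝ) 1 → Z}
    (hf : IsEmbedding f) {S : Set Z} (hS : IsPreconnected S) (hSf : S ⊆ range f) :
    ArcConnectedSet S := by
  have hS' : (f ⁻¹' S).OrdConnected := by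
    refine (hf.isInducing.isPreconnected_image.mp ?_).ordConnected
    rwa [image_preimage_eq_of_subset hSf]
  rintro _ ha _ hb hab
  obtain ⟨p, rfl⟩ := hSf ha
  obtain ⟨q, rfl⟩ := hSf hb
  have hpq : p ⊓ q < p ⊔ q := inf_lt_sup.mpr fun h ↦ hab (congrArg f h)
  refine ⟨f '' uIcc p q, isArc_image_Icc hf.continuous hf.injective hpq,
    image_subset_iff.mpr (hS'.uIcc_subset ha hb), mem_image_of_mem f left_mem_uIcc,
    mem_image_of_mem f right_mem_uIcc⟩

theorem IsEndpointPt.notMem_of_isArc [T2Space Z] {x : Z} (hx : IsEndpointPt x)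
    {H : ℕ → Set Z} (hH : ∀ i, IsCompact (H i) ∧ IsConnected (H i)) (hH_anti : Antitone H)
    (hH_inter : ⋂ i, H i = {x}) {N : ℕ} (hN : ∀ i ≥ N, ¬ ArcConnectedSet (H i))
    {A : Set Z} (hA : IsArc A) : x ∉ A := by
  intro hxA
  obtain ⟨a, haA, hax⟩ := hA.nontrivial.exists_ne x
  obtain ⟨i, hai⟩ : ∃ i, a ∉ H i := by
    by_contra! h
    exact hax (by simpa [hH_inter] using mem_iInter.mpr h)
  set M := max N i
  have hxM : x ∈ H M := mem_iInter.mp (hH_inter.symm ▸ mem_singleton x) M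
  obtain ⟨f, hf, rfl⟩ := hA
  rcases hx _ _ (isCompact_range hf.continuous) (isConnected_range hf.continuous) (hH M).1
    (hH M).2 hxA hxM with hAH | hHA
  · exact hai (hH_anti (le_max_right N i) (hAH haA))
  · exact hN M (le_max_left N i)
      (arcConnectedSet_of_subset_range hf (hH M).2.isPreconnected hHA)

end Arcs

theorem stmt1_general {K : Type*} [MetricSpace K] [CompactSpace K] [ConnectedSpace K]
    [Nontrivial K]
    (x : K) (hx : IsEndpointPt x) :
    (∀ A : Set K, IsArc A → x ∉ A) ↔
      ∃ H : ℕ → Set K,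
        (∀ i, IsCompact (H i) ∧ IsConnected (H i) ∧ ¬ (H i).Subsingleton) ∧
        (∀ i, H (i + 1) ⊆ H i) ∧ (⋂ i, H i) = {x} ∧
        ∃ N, ∀ i ≥ N, ¬ ArcConnectedSet (H i) := by
  constructor
  · intro hno
    obtain ⟨H, hH, hH_anti, hH_inter⟩ := exists_antitone_continua_iInter_eq_singleton x
    refine ⟨H, fun i ↦ ⟨(hH i).1, (hH i).2.1, not_subsingleton_iff.mpr (hH i).2.2⟩,
      fun i ↦ hH_anti i.le_succ, hH_inter, 0, fun i _ harc ↦ ?_⟩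
    have hxH : x ∈ H i := mem_iInter.mp (hH_inter.symm ▸ mem_singleton x) i
    obtain ⟨y, hy, hyx⟩ := (hH i).2.2.exists_ne x
    obtain ⟨A, hA, -, hxA, -⟩ := harc x hxH y hy hyx.symm
    exact hno A hA hxA
  · rintro ⟨H, hH, hH_succ, hH_inter, N, hN⟩ A hA
    exact hx.notMem_of_isArc (fun i ↦ ⟨(hH i).1, (hH i).2.1⟩) (antitone_nat_of_succ_le hH_succ)
      hH_inter hN hA

/-- Let `K` be a non-degenerate chainable continuum and `x ∈ K` an
endpoint.  Then `x` is not contained in any (non-degenerate) arc of `K` if and only if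
there is a nested decreasing sequence `(H i)` of non-degenerate subcontinua with
`⋂ i, H i = {x}` such that `H i` is not arc-connected for all sufficiently large `i`. -/
theorem stmt1 {K : Type*} [MetricSpace K] [CompactSpace K] [ConnectedSpace K]
    [Nontrivial K]
    (hchain : ∀ ε > (0:ℝ), ∃ f : K → ℝ, Continuous f ∧ Set.range f = Set.Icc 0 1 ∧
      ∀ y : ℝ, Metric.diam (f ⁻¹' {y}) < ε)
    (x : K) (hx : IsEndpointPt x) :
    (∀ A : Set K, IsArc A → x ∉ A) ↔
      ∃ H : ℕ → Set K,
        (∀ i, IsCompact (H i) ∧ IsConnected (H i) ∧ ¬ (H i).Subsingleton) ∧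
        (∀ i, H (i + 1) ⊆ H i) ∧ (⋂ i, H i) = {x} ∧
        ∃ N, ∀ i ≥ N, ¬ ArcConnectedSet (H i) :=
  stmt1_general x hx
end

section
/- For a unimodal map T on [0,1] with critical point c whose orbit never returns exactly to c, the difference of two consecutive cutting times is again a cutting time; that is, for every k ≥ 1 there exists Q(k) < k with S_k − S_{k−1} = S_{Q(k)}. -/
/-!
Let `m < m + j` be consecutive cutting times. Because `c ∈ D m`, the level `D (m+1)` is
`[c_{m+1}, c₁]`, which lies in `D 1 = [c, c₁]` because `c < c₁`. Inductively, while
`c ∉ D (m+i)` the level `D (m+i)` is `[c_{m+i}, c_i]` and lies in `D i`: if `c ∉ D i` both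
levels are simply pushed forward by `T`; if `c ∈ D i`, then `c_{m+i}` lies between `c_i` and `c`,
so unimodality puts `c_{m+i+1}` between `c_{i+1}` and `c₁`, i.e. inside `D (i+1) = [c_{i+1}, c₁]`.
At `i = j` this gives `c ∈ D (m+j) ⊆ D j`.
-/

open Set Filter Topology

/-- A unimodal map on `[0,1]` with critical point `c = 1/2`. -/
def IsUnimodal (T : ℝ → ℝ) : Prop :=
  ContinuousOn T (Set.Icc 0 1) ∧ Set.MapsTo T (Set.Icc 0 1) (Set.Icc 0 1) ∧
    StrictMonoOn T (Set.Icc 0 (1/2)) ∧ StrictAntiOn T (Set.Icc (1/2) 1)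

lemma mem_uIcc_of_mem_uIcc_of_notMem_uIcc {x b g c : ℝ} (hx : x ∈ uIcc b g)
    (hc : c ∈ uIcc b g) (hn : c ∉ uIcc x b) : x ∈ uIcc b c := by
  simp only [mem_uIcc, not_or, not_and_or, not_le] at hx hc hn ⊢
  rcases hx with ⟨_, _⟩ | ⟨_, _⟩ <;> rcases hc with ⟨_, _⟩ | ⟨_, _⟩ <;>
    rcases hn with ⟨_ | _, _ | _⟩ <;>
    first
    | exact Or.inl ⟨by linarith, by linarith⟩
    | exact Or.inr ⟨by linarith, by linarith⟩

structure IsUnimodalAt (T : ℝ → ℝ) (c : ℝ) : Prop where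
  mem : c ∈ Icc (0 : ℝ) 1
  continuousOn : ContinuousOn T (Icc 0 1)
  mapsTo : MapsTo T (Icc 0 1) (Icc 0 1)
  monotoneOn : MonotoneOn T (Icc 0 c)
  antitoneOn : AntitoneOn T (Icc c 1)

lemma IsUnimodal.isUnimodalAt {T : ℝ → ℝ} (hT : IsUnimodal T) : IsUnimodalAt T (1 / 2) :=
  ⟨⟨by norm_num, by norm_num⟩, hT.1, hT.2.1, hT.2.2.1.monotoneOn, hT.2.2.2.antitoneOn⟩

namespace IsUnimodalAt

variable {T : ℝ → ℝ} {c : ℝ} (hT : IsUnimodalAt T c)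
include hT

lemma iterate_mem (n : ℕ) : T^[n] c ∈ Icc (0 : ℝ) 1 :=
  hT.mapsTo.iterate n hT.mem

lemma apply_le_apply_of_mem_uIcc {x y : ℝ} (hx : x ∈ Icc (0 : ℝ) 1) (hy : y ∈ uIcc x c) :
    T x ≤ T y := by
  rcases le_total x c with hxc | hcx
  · rw [uIcc_of_le hxc] at hy
    exact hT.monotoneOn ⟨hx.1, hxc⟩ ⟨hx.1.trans hy.1, hy.2⟩ hy.1
  · rw [uIcc_of_ge hcx] at hy
    exact hT.antitoneOn ⟨hy.1, hy.2.trans hx.2⟩ ⟨hcx, hx.2⟩ hy.2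

lemma apply_le_apply_crit {x : ℝ} (hx : x ∈ Icc (0 : ℝ) 1) : T x ≤ T c :=
  hT.apply_le_apply_of_mem_uIcc hx right_mem_uIcc

lemma iterate_succ_le (n : ℕ) : T^[n + 1] c ≤ T c := by
  rw [Function.iterate_succ_apply']
  exact hT.apply_le_apply_crit (hT.iterate_mem n)

lemma image_uIcc {a b : ℝ} (ha : a ∈ Icc (0 : ℝ) 1) (hb : b ∈ Icc (0 : ℝ) 1)
    (hc : c ∉ uIcc a b) : T '' uIcc a b = uIcc (T a) (T b) := by
  have hsub : uIcc a b ⊆ Icc 0 1 := uIcc_subset_Icc ha hb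
  rcases lt_or_gt_of_ne (fun h : a = c => hc (h ▸ left_mem_uIcc)) with hac | hca
  · have hbc : b < c :=
      not_le.1 fun h => hc ⟨(min_le_left a b).trans hac.le, le_max_of_le_right h⟩
    exact (hT.continuousOn.mono hsub).image_uIcc_of_monotoneOn
      (hT.monotoneOn.mono (uIcc_subset_Icc ⟨ha.1, hac.le⟩ ⟨hb.1, hbc.le⟩))
  · have hcb : c < b := not_le.1 fun h => hc ⟨min_le_of_right_le h, le_max_of_le_left hca.le⟩
    exact (hT.continuousOn.mono hsub).image_uIcc_of_antitoneOn
      (hT.antitoneOn.mono (uIcc_subset_Icc ⟨hca.le, ha.2⟩ ⟨hcb.le, hb.2⟩))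

end IsUnimodalAt

/-- The levels are indexed from `1`; `D 0` is unconstrained. -/
structure IsHofbauerTower (T : ℝ → ℝ) (c : ℝ) (D : ℕ → Set ℝ) : Prop where
  one : D 1 = uIcc c (T c)
  succ_of_mem : ∀ n, 1 ≤ n → c ∈ D n → D (n + 1) = uIcc (T^[n + 1] c) (T c)
  succ_of_notMem : ∀ n, 1 ≤ n → c ∉ D n → D (n + 1) = T '' D n

namespace IsHofbauerTower

variable {T : ℝ → ℝ} {c : ℝ} {D : ℕ → Set ℝ}
  (hT : IsUnimodalAt T c) (hD : IsHofbauerTower T c D)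
include hT hD

lemma exists_succ_eq_uIcc {n : ℕ} (hn : 1 ≤ n) :
    ∃ β, D (n + 1) = uIcc (T^[n + 1] c) (T^[β + 1] c) := by
  induction n, hn using Nat.le_induction with
  | base => exact ⟨0, hD.succ_of_mem 1 le_rfl (hD.one ▸ left_mem_uIcc)⟩
  | succ n hn ih =>
    by_cases hcn : c ∈ D (n + 1)
    · exact ⟨0, hD.succ_of_mem _ (by omega) hcn⟩
    · obtain ⟨β, hβ⟩ := ih
      refine ⟨β + 1, ?_⟩
      rw [hD.succ_of_notMem _ (by omega) hcn, hβ,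
        hT.image_uIcc (hT.iterate_mem _) (hT.iterate_mem _) (hβ ▸ hcn),
        ← Function.iterate_succ_apply' T, ← Function.iterate_succ_apply' T]

lemma exists_eq_uIcc {n : ℕ} (hn : 1 ≤ n) : ∃ β, D n = uIcc (T^[n] c) (T^[β] c) := by
  rcases hn.eq_or_lt with rfl | hlt
  · exact ⟨0, by rw [hD.one, uIcc_comm]; rfl⟩
  · obtain ⟨m, rfl⟩ : ∃ m, n = m + 1 := ⟨n - 1, by omega⟩
    obtain ⟨β, hβ⟩ := hD.exists_succ_eq_uIcc hT (by omega : 1 ≤ m)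
    exact ⟨β + 1, hβ⟩

/-- If `T c < c`, every `c_k` with `k ≥ 1` lies below `c`, hence so does every level `D n`,
`n ≥ 2`. -/
lemma crit_lt_apply_crit (hfix : T c ≠ c) {n : ℕ} (hn : 2 ≤ n) (hcn : c ∈ D n) : c < T c := by
  by_contra! hle
  have below : ∀ k, T^[k + 1] c < c := fun k => (hT.iterate_succ_le k).trans_lt (hle.lt_of_ne hfix)
  obtain ⟨m, rfl⟩ : ∃ m, n = m + 1 := ⟨n - 1, by omega⟩
  obtain ⟨β, hβ⟩ := hD.exists_succ_eq_uIcc hT (by omega : 1 ≤ m)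
  rw [hβ, mem_uIcc] at hcn
  rcases hcn with h | h <;> linarith [h.1, h.2, below m, below β]

lemma succ_eq_uIcc_subset_one (hcT : c < T c) {m : ℕ} (hm : 1 ≤ m) (hcm : c ∈ D m)
    (hc : c ∉ D (m + 1)) :
    D (m + 1) = uIcc (T^[m + 1] c) (T^[1] c) ∧ D (m + 1) ⊆ D 1 := by
  have hD' := hD.succ_of_mem m hm hcm
  have hle : T^[m + 1] c ≤ T c := hT.iterate_succ_le m
  have hlt : c < T^[m + 1] c := by
    by_contra! h
    exact hc (hD' ▸ uIcc_of_le hle ▸ ⟨h, hcT.le⟩)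
  refine ⟨hD', ?_⟩
  rw [hD', hD.one]
  exact uIcc_subset_uIcc (uIcc_of_le hcT.le ▸ ⟨hlt.le, hle⟩) right_mem_uIcc

lemma add_succ_eq_uIcc_subset {m i : ℕ} (hi : 1 ≤ i)
    (heq : D (m + i) = uIcc (T^[m + i] c) (T^[i] c)) (hsub : D (m + i) ⊆ D i)
    (hc : c ∉ D (m + i)) :
    D (m + i + 1) = uIcc (T^[m + i + 1] c) (T^[i + 1] c) ∧ D (m + i + 1) ⊆ D (i + 1) := by
  have hD' : D (m + i + 1) = uIcc (T^[m + i + 1] c) (T^[i + 1] c) := by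
    rw [hD.succ_of_notMem _ (by omega) hc, heq,
      hT.image_uIcc (hT.iterate_mem _) (hT.iterate_mem _) (heq ▸ hc),
      ← Function.iterate_succ_apply' T, ← Function.iterate_succ_apply' T]
  refine ⟨hD', ?_⟩
  by_cases hci : c ∈ D i
  · obtain ⟨β, hβ⟩ := hD.exists_eq_uIcc hT hi
    have hbetween : T^[m + i] c ∈ uIcc (T^[i] c) c :=
      mem_uIcc_of_mem_uIcc_of_notMem_uIcc (hβ ▸ hsub (heq ▸ left_mem_uIcc)) (hβ ▸ hci)
        (heq ▸ hc)
    have hlow : T^[i + 1] c ≤ T^[m + i + 1] c := by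
      simp only [Function.iterate_succ_apply']
      exact hT.apply_le_apply_of_mem_uIcc (hT.iterate_mem i) hbetween
    rw [hD', hD.succ_of_mem i hi hci]
    exact uIcc_subset_uIcc (uIcc_of_le (hT.iterate_succ_le i) ▸ ⟨hlow, hT.iterate_succ_le _⟩)
      left_mem_uIcc
  · rw [hD.succ_of_notMem i hi hci, hD.succ_of_notMem _ (by omega) hc]
    exact image_mono hsub

lemma add_subset_of_gap (hcT : c < T c) {m j : ℕ} (hm : 1 ≤ m) (hcm : c ∈ D m)
    (hgap : ∀ i, 1 ≤ i → i < j → c ∉ D (m + i)) (hj : 1 < j) {i : ℕ} (hi : 1 ≤ i)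
    (hij : i ≤ j) : D (m + i) = uIcc (T^[m + i] c) (T^[i] c) ∧ D (m + i) ⊆ D i := by
  induction i, hi using Nat.le_induction with
  | base => exact hD.succ_eq_uIcc_subset_one hT hcT hm hcm (hgap 1 le_rfl hj)
  | succ i hi ih =>
    obtain ⟨heq, hsub⟩ := ih (by omega)
    exact hD.add_succ_eq_uIcc_subset hT hi heq hsub (hgap i hi (by omega))

lemma mem_of_gap (hcT : c < T c) {m j : ℕ} (hm : 1 ≤ m) (hcm : c ∈ D m)
    (hgap : ∀ i, 1 ≤ i → i < j → c ∉ D (m + i)) (hj : 1 ≤ j) (hcj : c ∈ D (m + j)) :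
    c ∈ D j := by
  rcases hj.eq_or_lt with rfl | hj
  · exact hD.one ▸ left_mem_uIcc
  · exact (hD.add_subset_of_gap hT hcT hm hcm hgap hj hj.le le_rfl).2 hcj

end IsHofbauerTower

theorem stmt2_general (T : ℝ → ℝ) (c : ℝ) (hc : c = 1/2) (hT : IsUnimodal T)
    (hnc : ∀ n, 1 ≤ n → T^[n] c ≠ c)
    (D : ℕ → Set ℝ)
    (hD1 : D 1 = Set.uIcc c (T c))
    (hDcut : ∀ n, 1 ≤ n → c ∈ D n → D (n + 1) = Set.uIcc (T^[n+1] c) (T c))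
    (hDnot : ∀ n, 1 ≤ n → c ∉ D n → D (n + 1) = T '' D n)
    (S : ℕ → ℕ) (hS : StrictMono S) (hS0 : S 0 = 1)
    (hSrange : ∀ n, 1 ≤ n → (c ∈ D n ↔ n ∈ Set.range S)) :
    ∀ k, 1 ≤ k → ∃ q, q < k ∧ S k = S (k - 1) + S q := by
  have hT' : IsUnimodalAt T c := hc ▸ hT.isUnimodalAt
  have hD : IsHofbauerTower T c D := ⟨hD1, hDcut, hDnot⟩
  have one_le : ∀ i, 1 ≤ S i := fun i => hS0 ▸ hS.monotone (Nat.zero_le i)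
  have cut : ∀ i, c ∈ D (S i) := fun i => (hSrange _ (one_le i)).2 ⟨i, rfl⟩
  have hcT : c < T c := hD.crit_lt_apply_crit hT' (hnc 1 le_rfl)
    (by have := hS zero_lt_one; omega) (cut 1)
  intro k hk
  have hlt : S (k - 1) < S k := hS (by omega)
  have hgap : ∀ i, 1 ≤ i → i < S k - S (k - 1) → c ∉ D (S (k - 1) + i) := by
    rintro i hi hij hmem
    obtain ⟨q, hq⟩ := (hSrange _ (by omega)).1 hmem
    have := hS.lt_iff_lt.1 (show S (k - 1) < S q by omega)
    have := hS.lt_iff_lt.1 (show S q < S k by omega)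
    omega
  have hj : 1 ≤ S k - S (k - 1) := by omega
  have hcj := hD.mem_of_gap hT' hcT (one_le _) (cut _) hgap hj
    (by rw [Nat.add_sub_cancel' hlt.le]; exact cut k)
  obtain ⟨q, hq⟩ := (hSrange _ hj).1 hcj
  exact ⟨q, hS.lt_iff_lt.1 (by have := one_le (k - 1); omega), by omega⟩

/-- For a unimodal map `T` with critical point `c` whose orbit is infinite
and never returns exactly to `c`, the difference of two consecutive cutting times is again
a cutting time: for every `k ≥ 1` there is `Q(k) < k` with `S k − S (k-1) = S (Q k)`.

Here `D` is the Hofbauer tower (`D 1 = [c, c₁]`, `D (n+1) = [c_{n+1}, c₁]` if `c ∈ D n`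
and `D (n+1) = T(D n)` otherwise) and `S` is the strictly monotone enumeration of the
cutting times, i.e. of `{n ≥ 1 | c ∈ D n}`, with `S 0 = 1`. -/
theorem stmt2 (T : ℝ → ℝ) (c : ℝ) (hc : c = 1/2) (hT : IsUnimodal T)
    (hnc : ∀ n, 1 ≤ n → T^[n] c ≠ c)
    (hinf : Function.Injective fun n : ℕ => T^[n] c)
    (D : ℕ → Set ℝ)
    (hD1 : D 1 = Set.uIcc c (T c))
    (hDcut : ∀ n, 1 ≤ n → c ∈ D n → D (n + 1) = Set.uIcc (T^[n+1] c) (T c))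
    (hDnot : ∀ n, 1 ≤ n → c ∉ D n → D (n + 1) = T '' D n)
    (S : ℕ → ℕ) (hS : StrictMono S) (hS0 : S 0 = 1)
    (hSrange : ∀ n, 1 ≤ n → (c ∈ D n ↔ n ∈ Set.range S)) :
    ∀ k, 1 ≤ k → ∃ q, q < k ∧ S k = S (k - 1) + S q :=
  stmt2_general T c hc hT hnc D hD1 hDcut hDnot S hS hS0 hSrange
end

section
/- With the Hofbauer tower intervals D_n for a unimodal map T, for every n ≥ 2 the interval D_n equals the closed interval with endpoints c_n and c_{β(n)}, where β(n) = n − max{ S_k : S_k < n }. -/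
open Set Filter Topology

/-- Image of an interval avoiding the critical point. -/
lemma image_uIcc_aux (T : ℝ → ℝ) (hT : IsUnimodal T) (a b : ℝ)
    (ha : a ∈ Set.Icc (0:ℝ) 1) (hb : b ∈ Set.Icc (0:ℝ) 1)
    (h : (1/2 : ℝ) ∉ Set.uIcc a b) :
    T '' Set.uIcc a b = Set.uIcc (T a) (T b) := by
  obtain ⟨hcont, hmaps, hmono, hanti⟩ := hT
  have hsub01 : Set.uIcc a b ⊆ Set.Icc (0:ℝ) 1 := Set.uIcc_subset_Icc ha hb
  have hcont' : ContinuousOn T (Set.uIcc a b) := hcont.mono hsub01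
  rw [Set.mem_uIcc] at h
  push_neg at h
  obtain ⟨h1, h2⟩ := h
  have hcase : Set.uIcc a b ⊆ Set.Icc (0:ℝ) (1/2) ∨ Set.uIcc a b ⊆ Set.Icc (1/2:ℝ) 1 := by
    rcases le_total a b with hab | hab
    · rw [Set.uIcc_of_le hab] at *
      rcases lt_or_ge b (1/2 : ℝ) with hb2 | hb2
      · exact Or.inl (Set.Icc_subset_Icc ha.1 hb2.le)
      · have left2 : (1/2:ℝ) ≤ a := by
          by_contra hcon
          push_neg at hcon
          exact absurd (h1 hcon.le) (not_lt.mpr hb2)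
        exact Or.inr (Set.Icc_subset_Icc left2 hb.2)
    · rw [Set.uIcc_of_ge hab] at *
      rcases lt_or_ge a (1/2 : ℝ) with ha2 | ha2
      · exact Or.inl (Set.Icc_subset_Icc hb.1 ha2.le)
      · have left2 : (1/2:ℝ) ≤ b := by
          by_contra hcon
          push_neg at hcon
          exact absurd (h2 hcon.le) (not_lt.mpr ha2)
        exact Or.inr (Set.Icc_subset_Icc left2 ha.2)
  have hmm : MonotoneOn T (Set.uIcc a b) ∨ AntitoneOn T (Set.uIcc a b) := by
    rcases hcase with hs | hs
    · exact Or.inl ((hmono.monotoneOn).mono hs)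
    · exact Or.inr ((hanti.antitoneOn).mono hs)
  apply Set.Subset.antisymm
  · rcases hmm with hm | hm
    · exact hm.mapsTo_uIcc.image_subset
    · exact hm.mapsTo_uIcc.image_subset
  · exact intermediate_value_uIcc hcont'
/-- With the Hofbauer tower intervals `D n` of a unimodal map `T`,
for every `n ≥ 2` the interval `D n` equals the closed interval with endpoints
`c_n = T^[n] c` and `c_{β(n)}`, where `β(n) = n − max { S k : S k < n }`. -/
theorem stmt3 (T : ℝ → ℝ) (c : ℝ) (hc : c = 1/2) (hT : IsUnimodal T)
    (hnc : ∀ n, 1 ≤ n → T^[n] c ≠ c)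
    (hinf : Function.Injective fun n : ℕ => T^[n] c)
    (D : ℕ → Set ℝ)
    (hD1 : D 1 = Set.uIcc c (T c))
    (hDcut : ∀ n, 1 ≤ n → c ∈ D n → D (n + 1) = Set.uIcc (T^[n+1] c) (T c))
    (hDnot : ∀ n, 1 ≤ n → c ∉ D n → D (n + 1) = T '' D n)
    (S : ℕ → ℕ) (hS : StrictMono S) (hS0 : S 0 = 1)
    (hSrange : ∀ n, 1 ≤ n → (c ∈ D n ↔ n ∈ Set.range S)) :
    ∀ n, 2 ≤ n →
      D n = Set.uIcc (T^[n] c) (T^[n - sSup {m : ℕ | m < n ∧ ∃ k, S k = m}] c) := by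
  obtain ⟨hcont, hmaps, hmono, hanti⟩ := hT
  have hc01 : c ∈ Set.Icc (0:ℝ) 1 := by rw [hc]; constructor <;> norm_num
  have hmem01 : ∀ k, T^[k] c ∈ Set.Icc (0:ℝ) 1 := by
    intro k
    induction k with
    | zero => simpa using hc01
    | succ k ih => rw [Function.iterate_succ_apply']; exact hmaps ih
  have hAne : ∀ n, 2 ≤ n → ({m : ℕ | m < n ∧ ∃ k, S k = m} : Set ℕ).Nonempty := by
    intro n hn
    exact ⟨1, by omega, 0, hS0⟩
  have hAbdd : ∀ n, BddAbove ({m : ℕ | m < n ∧ ∃ k, S k = m} : Set ℕ) :=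
    fun n => ⟨n, fun m hm => hm.1.le⟩
  have hsmem : ∀ n, 2 ≤ n →
      sSup ({m : ℕ | m < n ∧ ∃ k, S k = m} : Set ℕ) ∈ ({m : ℕ | m < n ∧ ∃ k, S k = m} : Set ℕ) :=
    fun n hn => Nat.sSup_mem (hAne n hn) (hAbdd n)
  intro n hn
  induction n, hn using Nat.le_induction with
  | base =>
    have hcD1 : c ∈ D 1 := (hSrange 1 le_rfl).mpr ⟨0, hS0⟩
    have hD2 : D 2 = Set.uIcc (T^[2] c) (T c) := hDcut 1 le_rfl hcD1
    have hsup2 : sSup ({m : ℕ | m < 2 ∧ ∃ k, S k = m} : Set ℕ) = 1 := by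
      apply le_antisymm
      · exact csSup_le (hAne 2 le_rfl) (fun m hm => Nat.lt_succ_iff.mp hm.1)
      · exact le_csSup (hAbdd 2) ⟨by omega, 0, hS0⟩
    rw [hD2, hsup2]
    norm_num
  | succ n hn ih =>
    by_cases hcDn : c ∈ D n
    · have hD' : D (n+1) = Set.uIcc (T^[n+1] c) (T c) := hDcut n (by omega) hcDn
      have hrange : ∃ k, S k = n := (hSrange n (by omega)).mp hcDn
      have hsup : sSup ({m : ℕ | m < n + 1 ∧ ∃ k, S k = m} : Set ℕ) = n := by
        apply le_antisymm
        · exact csSup_le (hAne (n+1) (by omega)) (fun m hm => Nat.lt_succ_iff.mp hm.1)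
        · exact le_csSup (hAbdd (n+1)) ⟨by omega, hrange⟩
      rw [hD', hsup]
      norm_num
    · have hnrange : ¬ ∃ k, S k = n := fun h => hcDn ((hSrange n (by omega)).mpr h)
      have hAeq : ({m : ℕ | m < n + 1 ∧ ∃ k, S k = m} : Set ℕ)
          = ({m : ℕ | m < n ∧ ∃ k, S k = m} : Set ℕ) := by
        ext m
        simp only [Set.mem_setOf_eq]
        constructor
        · rintro ⟨h1, h2⟩
          refine ⟨?_, h2⟩
          rcases Nat.lt_succ_iff_lt_or_eq.mp h1 with h | rfl
          · exact h
          · exact absurd h2 hnrange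
        · rintro ⟨h1, h2⟩
          exact ⟨by omega, h2⟩
      set s := sSup ({m : ℕ | m < n ∧ ∃ k, S k = m} : Set ℕ) with hs
      have hsn : s < n := (hsmem n hn).1
      have hnot : (1/2 : ℝ) ∉ Set.uIcc (T^[n] c) (T^[n - s] c) := by
        rw [← hc, ← ih]; exact hcDn
      have hD' : D (n+1) = T '' D n := hDnot n (by omega) hcDn
      rw [hD', ih, image_uIcc_aux T ⟨hcont, hmaps, hmono, hanti⟩ _ _ (hmem01 n) (hmem01 (n - s)) hnot,
        hAeq, ← hs]
      rw [← Function.iterate_succ_apply' T n c, ← Function.iterate_succ_apply' T (n - s) c]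
      have harith : n + 1 - s = n - s + 1 := by omega
      rw [harith]
end

section
/- For a unimodal map T with kneading map Q, the condition Q(k) → ∞ as k → ∞ implies that the lengths of the Hofbauer tower intervals satisfy |D_n| → 0 as n → ∞. -/
open Set Filter Topology

/-- For a tent map `T = T_s`, `s ∈ (√2, 2]`, with critical point of
infinite orbit, if the kneading map satisfies `Q(k) → ∞`, then the lengths (diameters)
of the Hofbauer tower intervals satisfy `|D n| → 0` as `n → ∞`. -/
theorem stmt5 (s : ℝ) (hs : s ∈ Set.Ioc (Real.sqrt 2) 2) (T : ℝ → ℝ)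
    (hT : ∀ x, T x = min (s * x) (s * (1 - x))) (c : ℝ) (hc : c = 1/2)
    (hnc : ∀ n, 1 ≤ n → T^[n] c ≠ c)
    (hinf : Function.Injective fun n : ℕ => T^[n] c)
    (D : ℕ → Set ℝ)
    (hD1 : D 1 = Set.uIcc c (T c))
    (hDcut : ∀ n, 1 ≤ n → c ∈ D n → D (n + 1) = Set.uIcc (T^[n+1] c) (T c))
    (hDnot : ∀ n, 1 ≤ n → c ∉ D n → D (n + 1) = T '' D n)
    (S : ℕ → ℕ) (hS : StrictMono S) (hS0 : S 0 = 1)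
    (hSrange : ∀ n, 1 ≤ n → (c ∈ D n ↔ n ∈ Set.range S))
    (Q : ℕ → ℕ) (hQ : ∀ k, 1 ≤ k → S k = S (k - 1) + S (Q k))
    (hQinf : Filter.Tendsto Q Filter.atTop Filter.atTop) :
    Filter.Tendsto (fun n => Metric.diam (D n)) Filter.atTop (nhds 0) := by
  classical
  obtain ⟨hs1, hs2⟩ := hs
  have hsqrt : (1:ℝ) < Real.sqrt 2 := by
    have : Real.sqrt 1 < Real.sqrt 2 := Real.sqrt_lt_sqrt (by norm_num) (by norm_num)
    simpa using this
  have hs0 : (1:ℝ) < s := hsqrt.trans hs1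
  have hsp : (0:ℝ) < s := by linarith
  set cn : ℕ → ℝ := fun n => T^[n] c with hcn
  -- branch formulas
  have hTle : ∀ x, x ≤ c → T x = s * x := by
    intro x hx
    rw [hT]
    apply min_eq_left
    rw [hc] at hx
    nlinarith
  have hTge : ∀ x, c ≤ x → T x = s * (1 - x) := by
    intro x hx
    rw [hT]
    apply min_eq_right
    rw [hc] at hx
    nlinarith
  -- the orbit stays in [0,1]
  have hmaps : ∀ x, x ∈ Icc (0:ℝ) 1 → T x ∈ Icc (0:ℝ) 1 := by
    rintro x ⟨h0, h1⟩
    rcases le_total x c with h | h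
    · rw [hTle x h]; rw [hc] at h
      constructor
      · positivity
      · nlinarith
    · rw [hTge x h]; rw [hc] at h
      constructor
      · nlinarith
      · nlinarith
  have hcn01 : ∀ n, cn n ∈ Icc (0:ℝ) 1 := by
    intro n
    induction n with
    | zero =>
      have : cn 0 = c := rfl
      rw [this, hc]; constructor <;> norm_num
    | succ n ih =>
      have h : cn (n+1) = T (cn n) := Function.iterate_succ_apply' T n c
      rw [h]; exact hmaps _ ih
  -- distance scaling under T for points on one side of c
  have hdist : ∀ a b : ℝ, (a ≤ c ∧ b ≤ c) ∨ (c ≤ a ∧ c ≤ b) →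
      dist (T a) (T b) = s * dist a b := by
    intro a b h
    rcases h with ⟨ha, hb⟩ | ⟨ha, hb⟩
    · rw [hTle a ha, hTle b hb, Real.dist_eq, Real.dist_eq, ← mul_sub, abs_mul,
        abs_of_pos hsp]
    · rw [hTge a ha, hTge b hb, Real.dist_eq, Real.dist_eq]
      have h1 : s * (1 - a) - s * (1 - b) = -(s * (a - b)) := by ring
      rw [h1, abs_neg, abs_mul, abs_of_pos hsp]
  -- image of an interval on one side of c
  have himg : ∀ a b : ℝ, (a ≤ c ∧ b ≤ c) ∨ (c ≤ a ∧ c ≤ b) →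
      T '' Set.uIcc a b = Set.uIcc (T a) (T b) := by
    intro a b h
    rcases h with ⟨ha, hb⟩ | ⟨ha, hb⟩
    · have hcongr : ∀ x ∈ Set.uIcc a b, T x = s * x := by
        intro x hx
        apply hTle
        rcases Set.mem_uIcc.mp hx with ⟨_, h2⟩ | ⟨_, h2⟩
        · exact h2.trans hb
        · exact h2.trans ha
      rw [Set.image_congr hcongr, Set.image_const_mul_uIcc, hTle a ha, hTle b hb]
    · have hcongr : ∀ x ∈ Set.uIcc a b, T x = s - s * x := by
        intro x hx
        have hx' : c ≤ x := by
          rcases Set.mem_uIcc.mp hx with ⟨h2, _⟩ | ⟨h2, _⟩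
          · exact ha.trans h2
          · exact hb.trans h2
        rw [hTge x hx']; ring
      rw [Set.image_congr hcongr]
      have himg2 : (fun x => s - s * x) '' Set.uIcc a b
          = (fun y => s - y) '' ((s * ·) '' Set.uIcc a b) := by
        rw [← Set.image_comp]; rfl
      rw [himg2, Set.image_const_mul_uIcc, Set.image_const_sub_uIcc,
        hTge a ha, hTge b hb]
      congr 1 <;> ring
  -- diameter of uIcc
  have hdiam : ∀ a b : ℝ, Metric.diam (Set.uIcc a b) = dist a b := by
    intro a b
    rw [Set.uIcc, Real.diam_Icc inf_le_sup, Real.dist_eq, abs_sub_comm]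
    exact max_sub_min_eq_abs a b
  -- cutting-time facts
  have hSge : ∀ m, 1 ≤ S m := fun m => hS0 ▸ hS.monotone (Nat.zero_le m)
  have hcut : ∀ m, c ∈ D (S m) := fun m => (hSrange (S m) (hSge m)).mpr ⟨m, rfl⟩
  have hnotcut : ∀ m n, S m < n → n < S (m+1) → c ∉ D n := by
    intro m n h1 h2 hcin
    obtain ⟨i, hi⟩ := (hSrange n ((hSge m).trans h1.le)).mp hcin
    rw [← hi] at h1 h2
    have hi1 : m < i := hS.lt_iff_lt.mp h1
    have hi2 : i < m + 1 := hS.lt_iff_lt.mp h2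
    omega
  -- main structure of the tower levels
  have main : ∀ m j, 1 ≤ j → S m + j ≤ S (m+1) →
      D (S m + j) = Set.uIcc (cn (S m + j)) (cn j) ∧
      dist (cn (S m + j)) (cn j) = s ^ j * dist (cn (S m)) c := by
    intro m j
    induction j with
    | zero => omega
    | succ j ih =>
      intro _ hle
      rcases Nat.eq_zero_or_pos j with rfl | hj
      · constructor
        · have h := hDcut (S m) (hSge m) (hcut m)
          have h1 : cn (S m + 1) = T^[S m + 1] c := rfl
          have h2 : cn 1 = T c := by
            show T^[1] c = T c
            rw [Function.iterate_one]
          rw [h, h1, h2]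
        · have h1 : cn (S m + 1) = T (cn (S m)) := Function.iterate_succ_apply' T (S m) c
          have h2 : cn 1 = T c := by
            show T^[1] c = T c
            rw [Function.iterate_one]
          have h3 : T c = T (cn 0) := rfl
          rw [h1, h2, pow_one, h3]
          have h0 : cn 0 = c := rfl
          rw [h0]
          rcases le_total (cn (S m)) c with h | h
          · exact hdist _ _ (Or.inl ⟨h, le_refl c⟩)
          · exact hdist _ _ (Or.inr ⟨h, le_refl c⟩)
      · have hle' : S m + j ≤ S (m+1) := by omega
        obtain ⟨hDj, hdj⟩ := ih hj hle'
        have hnot : c ∉ D (S m + j) := hnotcut m (S m + j) (by omega) (by omega)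
        have hsame : (cn (S m + j) ≤ c ∧ cn j ≤ c) ∨ (c ≤ cn (S m + j) ∧ c ≤ cn j) := by
          rcases le_total (cn (S m + j)) c with h1 | h1 <;>
            rcases le_total (cn j) c with h2 | h2
          · exact Or.inl ⟨h1, h2⟩
          · exact absurd (hDj ▸ Set.mem_uIcc.mpr (Or.inl ⟨h1, h2⟩)) hnot
          · exact absurd (hDj ▸ Set.mem_uIcc.mpr (Or.inr ⟨h2, h1⟩)) hnot
          · exact Or.inr ⟨h1, h2⟩
        have hstep : D (S m + (j+1)) = T '' D (S m + j) :=
          hDnot (S m + j) (by have := hSge m; omega) hnot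
        have hc1 : cn (S m + (j+1)) = T (cn (S m + j)) :=
          Function.iterate_succ_apply' T (S m + j) c
        have hc2 : cn (j+1) = T (cn j) := Function.iterate_succ_apply' T j c
        constructor
        · rw [hstep, hDj, himg _ _ hsame, hc1, hc2]
        · rw [hc1, hc2, hdist _ _ hsame, hdj, pow_succ]
          ring
  -- the key identity at cutting times
  have key1 : ∀ m, D (S (m+1)) = Set.uIcc (cn (S (m+1))) (cn (S (Q (m+1)))) ∧
      dist (cn (S (m+1))) (cn (S (Q (m+1)))) = s ^ (S (Q (m+1))) * dist (cn (S m)) c := by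
    intro m
    have hq : S (m+1) = S m + S (Q (m+1)) := by
      have := hQ (m+1) (by omega)
      simpa using this
    have h := main m (S (Q (m+1))) (hSge _) (by omega)
    rw [← hq] at h
    exact h
  -- the scaled distance is at most 1
  have hdistle : ∀ m, s ^ (S (Q (m+1))) * dist (cn (S m)) c ≤ 1 := by
    intro m
    rw [← (key1 m).2]
    obtain ⟨h1, h2⟩ := hcn01 (S (m+1))
    obtain ⟨h3, h4⟩ := hcn01 (S (Q (m+1)))
    rw [Real.dist_eq, abs_le]
    constructor <;> linarith
  -- the points cn (S m) approach c at exponential speed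
  have hcnclose : ∀ m, dist (cn (S m)) c ≤ (s ^ (S (Q (m+1))))⁻¹ := by
    intro m
    have h := hdistle m
    have hp : (0:ℝ) < s ^ (S (Q (m+1))) := pow_pos hsp _
    calc dist (cn (S m)) c
        = (s ^ (S (Q (m+1))))⁻¹ * (s ^ (S (Q (m+1))) * dist (cn (S m)) c) := by
          field_simp
      _ ≤ (s ^ (S (Q (m+1))))⁻¹ * 1 :=
          mul_le_mul_of_nonneg_left h (inv_nonneg.mpr hp.le)
      _ = (s ^ (S (Q (m+1))))⁻¹ := mul_one _
  -- diameters between cutting times are bounded by the cutting-time value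
  have diamle : ∀ m n, S m < n → n ≤ S (m+1) →
      Metric.diam (D n) ≤ s ^ (S (Q (m+1))) * dist (cn (S m)) c := by
    intro m n h1 h2
    obtain ⟨hDn, hdn⟩ := main m (n - S m) (by omega) (by omega)
    rw [show S m + (n - S m) = n from by omega] at hDn hdn
    rw [hDn, hdiam, hdn]
    apply mul_le_mul_of_nonneg_right _ dist_nonneg
    apply pow_le_pow_right₀ hs0.le
    have hq : S (m+1) = S m + S (Q (m+1)) := by
      have := hQ (m+1) (by omega)
      simpa using this
    omega
  -- final limit argument
  rw [Metric.tendsto_atTop]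
  intro ε hε
  obtain ⟨B, hB⟩ := pow_unbounded_of_one_lt (2/ε) hs0
  have hBinv : (s ^ B)⁻¹ < ε / 2 := by
    have hBp : (0:ℝ) < s ^ B := pow_pos hsp _
    have h2 : (0:ℝ) < ε/2 := by positivity
    rw [inv_lt_comm₀ hBp h2, inv_div]
    exact hB
  -- auxiliary: for Q i ≥ B, the distance bound is < ε/2
  have haux : ∀ m, B ≤ Q (m+1) → dist (cn (S m)) c < ε / 2 := by
    intro m hm
    refine lt_of_le_of_lt ((hcnclose m).trans ?_) hBinv
    apply inv_anti₀ (pow_pos hsp _)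
    apply pow_le_pow_right₀ hs0.le
    exact hm.trans (hS.le_apply)
  obtain ⟨K1, hK1⟩ := Filter.eventually_atTop.mp (hQinf.eventually_ge_atTop B)
  obtain ⟨K2, hK2⟩ := Filter.eventually_atTop.mp (hQinf.eventually_ge_atTop K1)
  set K := max K1 K2 with hK
  refine ⟨S K + 1, fun n hn => ?_⟩
  -- locate n between consecutive cutting times
  have hexm : ∃ m, S m < n ∧ n ≤ S (m+1) := by
    have hex : ∃ k, n ≤ S k := ⟨n, hS.le_apply⟩
    have hk : n ≤ S (Nat.find hex) := Nat.find_spec hex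
    have hk0 : Nat.find hex ≠ 0 := by
      intro h
      rw [h, hS0] at hk
      have := hSge K
      omega
    refine ⟨Nat.find hex - 1, ?_, ?_⟩
    · by_contra h
      push_neg at h
      exact Nat.find_min hex (by omega) h
    · rw [show Nat.find hex - 1 + 1 = Nat.find hex from by omega]
      exact hk
  obtain ⟨m, hm1, hm2⟩ := hexm
  have hmK : K ≤ m := by
    have : S K < S (m+1) := by omega
    have := hS.lt_iff_lt.mp this
    omega
  -- bound diam (D n)
  have hb1 : Metric.diam (D n) ≤ dist (cn (S (m+1))) (cn (S (Q (m+1)))) := by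
    rw [(key1 m).2]
    exact diamle m n hm1 hm2
  have hb2 : dist (cn (S (m+1))) (cn (S (Q (m+1)))) ≤
      dist (cn (S (m+1))) c + dist (cn (S (Q (m+1)))) c := by
    calc dist (cn (S (m+1))) (cn (S (Q (m+1))))
        ≤ dist (cn (S (m+1))) c + dist c (cn (S (Q (m+1)))) := dist_triangle _ _ _
      _ = dist (cn (S (m+1))) c + dist (cn (S (Q (m+1)))) c := by rw [dist_comm c]
  have hQm2 : B ≤ Q (m+2) := hK1 (m+2) (by omega)
  have hQQ : B ≤ Q (Q (m+1) + 1) := by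
    apply hK1
    have : K1 ≤ Q (m+1) := hK2 (m+1) (by omega)
    omega
  have hb3 : dist (cn (S (m+1))) c < ε / 2 := haux (m+1) hQm2
  have hb4 : dist (cn (S (Q (m+1)))) c < ε / 2 := haux (Q (m+1)) hQQ
  have hfin : Metric.diam (D n) < ε := by linarith
  rw [Real.dist_eq, sub_zero, abs_of_nonneg Metric.diam_nonneg]
  exact hfin
end

section
/- Let H be a subcontinuum of the inverse limit X of a unimodal map T. If there exists k ∈ ℕ such that the critical point c does not belong to π_i(H) for all i > k, then H is either a single point or an arc. -/
open Set Filter Topology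

/-- The inverse limit `lim←(K, T)`, as the space of backward orbits. -/
abbrev InvLim (T : ℝ → ℝ) (K : Set ℝ) :=
  {x : ℕ → ℝ // (∀ n, x n ∈ K) ∧ ∀ n, T (x (n + 1)) = x n}

/-! Beyond some index every coordinate projection of `H` misses the critical point, so, `H`
being connected, it stays on one monotone branch of `T`, where `T` is injective. Hence equal
coordinates at that index force equal coordinates at all later indices, and so everywhere:
one projection maps `H` injectively, and therefore homeomorphically, onto a compact interval. -/

theorem IsArc.of_homeomorph {Z : Type*} [TopologicalSpace Z] {A : Set Z}
    (e : Icc (0:ℝ) 1 ≃ₜ A) : IsArc A :=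
  ⟨Subtype.val ∘ e, IsEmbedding.subtypeVal.comp e.isEmbedding, by
    rw [range_comp, e.range_coe, image_univ, Subtype.range_coe]⟩

theorem eq_singleton_or_isArc_of_injOn {Z : Type*} [TopologicalSpace Z] [T2Space Z]
    {H : Set Z} (hcomp : IsCompact H) (hconn : IsConnected H) {f : Z → ℝ}
    (hf : Continuous f) (hinj : InjOn f H) : (∃ a, H = {a}) ∨ IsArc H := by
  set s := f '' H
  have hs : s = Icc (sInf s) (sSup s) :=
    eq_Icc_of_connected_compact (hconn.image f hf.continuousOn) (hcomp.image hf)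
  rcases (csInf_le_csSup (hconn.nonempty.image f) (hcomp.image hf).bddBelow
    (hcomp.image hf).bddAbove).eq_or_lt with heq | hlt
  · obtain ⟨x, hx⟩ := hconn.nonempty
    refine Or.inl ⟨x, Subsingleton.eq_singleton_of_mem (fun y hy z hz => hinj hy hz ?_) hx⟩
    have hsub : s.Subsingleton := by rw [hs, heq, Icc_self]; exact subsingleton_singleton
    exact hsub (mem_image_of_mem f hy) (mem_image_of_mem f hz)
  · right
    have : CompactSpace H := isCompact_iff_compactSpace.mp hcomp
    have hemb : IsEmbedding (H.domRestrict f) :=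
      ((hf.comp continuous_subtype_val).isClosedEmbedding
        (injOn_iff_injective.mp hinj)).isEmbedding
    have hrange : Icc (sInf s) (sSup s) = range (H.domRestrict f) := by
      rw [← hs, range_domRestrict]
    exact .of_homeomorph <| (iccHomeoI _ _ hlt).symm.trans <|
      (Homeomorph.setCongr hrange).trans hemb.toHomeomorph.symm

theorem IsUnimodal.injOn_of_half_notMem {T : ℝ → ℝ} (hT : IsUnimodal T) {S : Set ℝ}
    (hS : S ⊆ Icc 0 1) (hconn : IsPreconnected S) (hc : (1:ℝ)/2 ∉ S) : InjOn T S := by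
  obtain ⟨-, -, hmono, hanti⟩ := hT
  have hsplit : S ⊆ Iio (1/2) ∪ Ioi (1/2) := fun t ht =>
    (ne_of_mem_of_not_mem ht hc).lt_or_gt
  rcases hconn.subset_or_subset isOpen_Iio isOpen_Ioi
      ((Iio_disjoint_Ici le_rfl).mono_right Ioi_subset_Ici_self) hsplit with hlo | hhi
  · exact hmono.injOn.mono fun t ht => mem_Icc.2 ⟨(hS ht).1, (hlo ht).le⟩
  · exact hanti.injOn.mono fun t ht => mem_Icc.2 ⟨(hhi ht).le, (hS ht).2⟩

namespace InvLim

variable {T : ℝ → ℝ} {K : Set ℝ}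

theorem continuous_coord (n : ℕ) : Continuous fun x : InvLim T K => x.1 n :=
  (continuous_apply n).comp continuous_subtype_val

theorem coord_eq_iterate (x : InvLim T K) (n d : ℕ) : x.1 n = T^[d] (x.1 (n + d)) := by
  induction d with
  | zero => rfl
  | succ d ih => rw [ih, ← x.2.2 (n + d), ← Function.iterate_succ_apply]; rfl

theorem injOn_coord {H : Set (InvLim T K)} {k : ℕ}
    (hT : ∀ i, k < i → InjOn T ((fun x : InvLim T K => x.1 i) '' H)) :
    InjOn (fun x : InvLim T K => x.1 k) H := by
  intro x hx y hy hxy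
  have htail : ∀ j, x.1 (k + j) = y.1 (k + j) := by
    intro j
    induction j with
    | zero => exact hxy
    | succ j ih =>
      rw [← add_assoc]
      refine hT (k + j + 1) (by omega) ⟨x, hx, rfl⟩ ⟨y, hy, rfl⟩ ?_
      rw [x.2.2, y.2.2, ih]
  exact Subtype.ext <| funext fun n => by
    rw [coord_eq_iterate x n k, coord_eq_iterate y n k, add_comm, htail]

end InvLim

theorem stmt6_general (T : ℝ → ℝ) (hT : IsUnimodal T)
    (H : Set (InvLim T (Set.Icc 0 1)))
    (hcomp : IsCompact H) (hconn : IsConnected H)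
    (hk : ∃ k : ℕ, ∀ i, k < i →
      (1:ℝ)/2 ∉ (fun x : InvLim T (Set.Icc 0 1) => x.1 i) '' H) :
    (∃ a, H = {a}) ∨ IsArc H := by
  obtain ⟨k, hk⟩ := hk
  refine eq_singleton_or_isArc_of_injOn hcomp hconn (InvLim.continuous_coord k)
    (InvLim.injOn_coord fun i hi => hT.injOn_of_half_notMem ?_ ?_ (hk i hi))
  · rintro _ ⟨x, -, rfl⟩
    exact x.2.1 i
  · exact (hconn.image _ (InvLim.continuous_coord i).continuousOn).isPreconnected

/-- Let `H` be a subcontinuum of the inverse limit `X` of a unimodal map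
`T`.  If there is `k` such that the critical point `c` does not belong to `π_i(H)` for all
`i > k`, then `H` is a single point or an arc. -/
theorem stmt6 (T : ℝ → ℝ) (hT : IsUnimodal T)
    (H : Set (InvLim T (Set.Icc 0 1))) (hne : H.Nonempty)
    (hcomp : IsCompact H) (hconn : IsConnected H)
    (hk : ∃ k : ℕ, ∀ i, k < i →
      (1:ℝ)/2 ∉ (fun x : InvLim T (Set.Icc 0 1) => x.1 i) '' H) :
    (∃ a, H = {a}) ∨ IsArc H :=
  stmt6_general T hT H hcomp hconn hk
end

section
/- Let T be a tent map with slope s ∈ (√2, 2] restricted to its core [c_2, c_1], and suppose T is locally eventually onto the core. Then a subcontinuum H of the core inverse limit X′ is a proper subcontinuum if and only if the lengths of its projections satisfy |π_i(H)| → 0 as i → ∞. -/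
open Set Filter Topology

section Tent
variable {s : ℝ} (hs1 : 1 < s) (hs2 : s ≤ 2) {T : ℝ → ℝ}
  (hT : ∀ x, T x = min (s * x) (s * (1 - x)))

include hs1 hs2 hT

lemma tent_mem {x : ℝ} (hx : x ∈ Icc (s - s*s/2) (s/2)) :
    T x ∈ Icc (s - s*s/2) (s/2) := by
  obtain ⟨h1, h2⟩ := hx
  rw [hT]
  constructor
  · apply le_min <;> nlinarith
  · rcases le_total x (1/2) with h | h
    · exact le_trans (min_le_left _ _) (by nlinarith)
    · exact le_trans (min_le_right _ _) (by nlinarith)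

omit hs1 hs2 in
lemma tent_cont : Continuous T := by
  have : T = fun x => min (s * x) (s * (1 - x)) := funext hT
  rw [this]
  fun_prop

lemma tent_surj {y : ℝ} (hy : y ∈ Icc (s - s*s/2) (s/2)) :
    ∃ x ∈ Icc (s - s*s/2) (s/2), T x = y := by
  have h12 : (1:ℝ)/2 ≤ s/2 := by nlinarith
  have hsub : Icc (1/2 : ℝ) (s/2) ⊆ Icc (s - s*s/2) (s/2) :=
    Icc_subset_Icc (by nlinarith) le_rfl
  have hva : T (s/2) = s - s*s/2 := by rw [hT]; rw [min_eq_right (by nlinarith)]; ring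
  have hvb : T (1/2 : ℝ) = s/2 := by
    rw [hT, show (1:ℝ) - 1/2 = 1/2 by norm_num, min_self]; ring
  have := intermediate_value_Icc' h12 ((tent_cont hT).continuousOn)
  rw [hva, hvb] at this
  obtain ⟨x, hx, hxy⟩ := this hy
  exact ⟨x, hsub hx, hxy⟩

lemma tent_image : T '' Icc (s - s*s/2) (s/2) = Icc (s - s*s/2) (s/2) := by
  apply Subset.antisymm
  · rintro _ ⟨x, hx, rfl⟩; exact tent_mem hs1 hs2 hT hx
  · rintro y hy
    obtain ⟨x, hx, hxy⟩ := tent_surj hs1 hs2 hT hy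
    exact ⟨x, hx, hxy⟩

lemma tent_iter_image (m : ℕ) :
    T^[m] '' Icc (s - s*s/2) (s/2) = Icc (s - s*s/2) (s/2) := by
  induction m with
  | zero => simp
  | succ k ih =>
    rw [Function.iterate_succ', Set.image_comp, ih, tent_image hs1 hs2 hT]

lemma tent_iter_mem (m : ℕ) {x : ℝ} (hx : x ∈ Icc (s - s*s/2) (s/2)) :
    T^[m] x ∈ Icc (s - s*s/2) (s/2) := by
  induction m with
  | zero => simpa using hx
  | succ k ih => rw [Function.iterate_succ_apply']; exact tent_mem hs1 hs2 hT ih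

lemma tent_leo_uniform
    (hleo : ∀ a b : ℝ, a ∈ Icc (s - s*s/2) (s/2) → b ∈ Icc (s - s*s/2) (s/2) →
      a < b → ∃ n : ℕ, T^[n] '' Set.Ioo a b = Icc (s - s*s/2) (s/2))
    {ε : ℝ} (hε : 0 < ε) :
    ∃ N : ℕ, ∀ u v : ℝ, s - s*s/2 ≤ u → v ≤ s/2 → u + ε ≤ v →
      T^[N] '' Icc u v = Icc (s - s*s/2) (s/2) := by
  set A := s - s*s/2 with hA
  set B := s/2 with hB
  have hδ : (0:ℝ) < ε/4 := by linarith
  set M := ⌈(B - A)/(ε/4)⌉₊ with hM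
  set n : ℕ → ℕ := fun k =>
    if h : (A + k*(ε/4) ∈ Icc A B ∧ A + k*(ε/4) + ε/2 ∈ Icc A B) then
      (hleo _ _ h.1 h.2 (by linarith)).choose else 0 with hn
  refine ⟨(Finset.range (M+1)).sup n, fun u v hu hv huv => ?_⟩
  set N := (Finset.range (M+1)).sup n with hN
  set k := ⌈(u - A)/(ε/4)⌉₊ with hk
  have huB : u ≤ B := by linarith
  have hk1 : u ≤ A + k*(ε/4) := by
    have h := Nat.le_ceil ((u - A)/(ε/4))
    rw [div_le_iff₀ hδ, ← hk] at h
    linarith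
  have hk2 : A + k*(ε/4) ≤ u + ε/4 := by
    have h0 : (0:ℝ) ≤ (u - A)/(ε/4) := div_nonneg (by linarith) (le_of_lt hδ)
    have h := Nat.ceil_lt_add_one h0
    rw [show (u - A)/(ε/4) + 1 = (u - A + ε/4)/(ε/4) by field_simp, ← hk,
      lt_div_iff₀ hδ] at h
    linarith
  have hkM : k ≤ M := by
    rw [hk, hM]
    exact Nat.ceil_le_ceil (by gcongr <;> linarith)
  set a := A + k*(ε/4) with ha
  clear_value a
  have haK : a ∈ Icc A B := ⟨by rw [ha]; exact le_add_of_nonneg_right (by positivity), by linarith⟩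
  have hbK : a + ε/2 ∈ Icc A B := ⟨le_trans haK.1 (le_add_of_nonneg_right (by positivity)), by linarith⟩
  have hspec : T^[n k] '' Ioo a (a + ε/2) = Icc A B := by
    have hcond : A + (k:ℝ)*(ε/4) ∈ Icc A B ∧ A + (k:ℝ)*(ε/4) + ε/2 ∈ Icc A B := by
      rw [← ha]; exact ⟨haK, hbK⟩
    rw [ha]
    simp only [hn, dif_pos hcond]
    exact (hleo _ _ hcond.1 hcond.2 (by linarith)).choose_spec
  have hNk : n k ≤ N := Finset.le_sup (Finset.mem_range.2 (Nat.lt_succ_of_le hkM))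
  have hIooN : T^[N] '' Ioo a (a + ε/2) = Icc A B := by
    rw [← Nat.sub_add_cancel hNk, Function.iterate_add, Set.image_comp, hspec,
      tent_iter_image hs1 hs2 hT]
  apply Subset.antisymm
  · rintro _ ⟨x, hx, rfl⟩
    exact tent_iter_mem hs1 hs2 hT N (Icc_subset_Icc hu hv hx)
  · rw [← hIooN]
    exact Set.image_mono (fun x hx => ⟨le_trans hk1 hx.1.le, le_trans hx.2.le (by linarith)⟩)

end Tent

lemma invlim_iter {T : ℝ → ℝ} {K : Set ℝ} (x : InvLim T K) (j k : ℕ) :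
    T^[k] (x.1 (j + k)) = x.1 j := by
  induction k with
  | zero => rfl
  | succ m ih =>
    rw [show j + (m+1) = (j+m)+1 from rfl, Function.iterate_succ_apply, x.2.2 (j+m), ih]

lemma invlim_image {T : ℝ → ℝ} {K : Set ℝ} (H : Set (InvLim T K)) (j k : ℕ) :
    (fun x : InvLim T K => x.1 j) '' H
      = T^[k] '' ((fun x : InvLim T K => x.1 (j+k)) '' H) := by
  rw [Set.image_image]
  exact Set.image_congr (fun x _ => (invlim_iter x j k).symm)

lemma invlim_proj_surj {s : ℝ} (hs1 : 1 < s) (hs2 : s ≤ 2) {T : ℝ → ℝ}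
    (hT : ∀ x, T x = min (s * x) (s * (1 - x))) (i : ℕ) {y : ℝ}
    (hy : y ∈ Icc (s - s*s/2) (s/2)) :
    ∃ z : InvLim T (Icc (s - s*s/2) (s/2)), z.1 i = y := by
  have hf : ∀ w : {z : ℝ // z ∈ Icc (s - s*s/2) (s/2)},
      ∃ x : {z : ℝ // z ∈ Icc (s - s*s/2) (s/2)}, T x.1 = w.1 := fun w => by
    obtain ⟨x, hx, hxy⟩ := tent_surj hs1 hs2 hT w.2
    exact ⟨⟨x, hx⟩, hxy⟩
  choose f hfspec using hf
  set b : ℕ → {z : ℝ // z ∈ Icc (s - s*s/2) (s/2)} := fun n => f^[n] ⟨y, hy⟩ with hb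
  have hbrec : ∀ n, T (b (n+1)).1 = (b n).1 := fun n => by
    rw [hb]; simp only [Function.iterate_succ_apply']; exact hfspec _
  refine ⟨⟨fun n => if i ≤ n then (b (n - i)).1 else T^[i - n] y, ?_, ?_⟩, ?_⟩
  · intro n; dsimp only; split
    · exact (b _).2
    · exact tent_iter_mem hs1 hs2 hT _ hy
  · intro n; dsimp only
    rcases le_or_gt i (n+1) with h | h
    · rw [if_pos h]
      rcases le_or_gt i n with h' | h'
      · rw [if_pos h', show n + 1 - i = (n - i) + 1 by omega]; exact hbrec _
      · have hin : i = n + 1 := by omega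
        rw [if_neg (not_le.2 h'), hin]
        simp only [Nat.sub_self, Function.iterate_zero_apply, hb,
          show n + 1 - n = 1 by omega, Function.iterate_one]
    · rw [if_neg (by omega), if_neg (by omega), show i - n = (i - (n+1)) + 1 by omega,
        Function.iterate_succ_apply']
  · dsimp only; rw [if_pos le_rfl]
    simp [hb]

/-- Let `T = T_s`, `s ∈ (√2, 2]`, restricted to its core
`[c₂, c₁]`, and suppose `T` is locally eventually onto the core.  Then a subcontinuum `H`
of the core inverse limit `X′` is proper if and only if `diam (π_i(H)) → 0` as `i → ∞`. -/
theorem stmt7 (s : ℝ) (hs : s ∈ Set.Ioc (Real.sqrt 2) 2) (T : ℝ → ℝ)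
    (hT : ∀ x, T x = min (s * x) (s * (1 - x))) (c : ℝ) (hc : c = 1/2)
    (K : Set ℝ) (hK : K = Set.Icc (T^[2] c) (T c))
    (hleo : ∀ a b : ℝ, a ∈ K → b ∈ K → a < b → ∃ n : ℕ, T^[n] '' Set.Ioo a b = K)
    (H : Set (InvLim T K)) (hne : H.Nonempty) (hcomp : IsCompact H)
    (hconn : IsConnected H) :
    H ≠ Set.univ ↔
      Filter.Tendsto (fun i => Metric.diam ((fun x : InvLim T K => x.1 i) '' H))
        Filter.atTop (nhds 0) := by
  have hsqrt : (1:ℝ) < Real.sqrt 2 := by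
    rw [show (1:ℝ) = Real.sqrt 1 by simp]
    exact Real.sqrt_lt_sqrt (by norm_num) (by norm_num)
  have hs1 : 1 < s := lt_trans hsqrt hs.1
  have hs2 : s ≤ 2 := hs.2
  subst hc
  have e1 : T (1/2 : ℝ) = s/2 := by
    rw [hT, show (1:ℝ) - 1/2 = 1/2 by norm_num, min_self]; ring
  have e2 : T^[2] (1/2 : ℝ) = s - s*s/2 := by
    rw [show T^[2] (1/2 : ℝ) = T (T (1/2)) from rfl, e1, hT,
      min_eq_right (by nlinarith)]; ring
  rw [e1, e2] at hK
  subst hK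
  set π : ℕ → InvLim T (Icc (s - s*s/2) (s/2)) → ℝ := fun i x => x.1 i with hπ
  have hcontπ : ∀ i, Continuous (π i) := fun i =>
    (continuous_apply i).comp continuous_subtype_val
  set S : ℕ → Set ℝ := fun i => π i '' H with hS
  have hSsub : ∀ i, S i ⊆ Icc (s - s*s/2) (s/2) := by
    rintro i _ ⟨x, hx, rfl⟩; exact x.2.1 i
  have hSrel : ∀ j k, S j = T^[k] '' S (j + k) := fun j k => invlim_image H j k
  have hall : ∀ i, (fun x : InvLim T (Icc (s - s*s/2) (s/2)) => x.1 i) '' Set.univ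
      = Icc (s - s*s/2) (s/2) := by
    intro i
    apply Subset.antisymm
    · rintro _ ⟨x, -, rfl⟩; exact x.2.1 i
    · intro y hy
      obtain ⟨z, hz⟩ := invlim_proj_surj hs1 hs2 hT i hy
      exact ⟨z, trivial, hz⟩
  have hdiamK : Metric.diam (Icc (s - s*s/2) (s/2)) = s/2 - (s - s*s/2) :=
    Real.diam_Icc (by nlinarith)
  constructor
  · -- proper ⟹ tendsto
    intro hH
    by_contra hnot
    apply hH
    rw [Metric.tendsto_atTop] at hnot
    push_neg at hnot
    obtain ⟨ε, hε, hfreq⟩ := hnot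
    have hfreq' : ∀ N₀ : ℕ, ∃ i ≥ N₀, ε ≤ Metric.diam (S i) := by
      intro N₀
      obtain ⟨i, hi, hd⟩ := hfreq N₀
      refine ⟨i, hi, ?_⟩
      rw [Real.dist_0_eq_abs, abs_of_nonneg Metric.diam_nonneg] at hd
      exact hd
    obtain ⟨N, hN⟩ := tent_leo_uniform hs1 hs2 hT hleo hε
    have hSK : ∀ j, S j = Icc (s - s*s/2) (s/2) := by
      intro j
      obtain ⟨i, hi, hd⟩ := hfreq' (j + N)
      have hSc : IsCompact (S i) := hcomp.image (hcontπ i)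
      have hSconn : IsConnected (S i) := hconn.image _ (hcontπ i).continuousOn
      have hSne : (S i).Nonempty := hne.image _
      have hSicc : S i = Icc (sInf (S i)) (sSup (S i)) :=
        eq_Icc_of_connected_compact hSconn hSc
      have hinf : sInf (S i) ∈ S i := hSc.sInf_mem hSne
      have hsup : sSup (S i) ∈ S i := hSc.sSup_mem hSne
      have hle : sInf (S i) ≤ sSup (S i) :=
        Real.sInf_le_sSup _ (hSc.bddBelow) (hSc.bddAbove)
      have hd' : ε ≤ sSup (S i) - sInf (S i) := by
        rw [hSicc, Real.diam_Icc hle] at hd; exact hd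
      have hiK : T^[N] '' S i = Icc (s - s*s/2) (s/2) := by
        rw [hSicc]
        exact hN _ _ (hSsub i hinf).1 (hSsub i hsup).2 (by linarith)
      have hmi : S (i - N) = Icc (s - s*s/2) (s/2) := by
        have := hSrel (i - N) N
        rw [show i - N + N = i by omega] at this
        rw [this, hiK]
      have := hSrel j (i - N - j)
      rw [show j + (i - N - j) = i - N by omega, hmi,
        tent_iter_image hs1 hs2 hT] at this
      exact this
    apply Set.eq_univ_iff_forall.2
    intro y
    have hyn : ∀ n, ∃ h ∈ H, h.1 n = y.1 n := by
      intro n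
      have : y.1 n ∈ S n := by rw [hSK n]; exact y.2.1 n
      obtain ⟨g, hgH, hgv⟩ := this
      exact ⟨g, hgH, hgv⟩
    choose g hgH hgv using hyn
    have hconv : Filter.Tendsto g Filter.atTop (nhds y) := by
      rw [tendsto_subtype_rng, tendsto_pi_nhds]
      intro j
      apply Filter.Tendsto.congr' _ tendsto_const_nhds
      filter_upwards [Filter.eventually_ge_atTop j] with n hn
      have h1 := invlim_iter y j (n - j)
      have h2 := invlim_iter (g n) j (n - j)
      rw [show j + (n - j) = n by omega] at h1 h2
      rw [← h1, ← h2, hgv n]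
    exact hcomp.isClosed.mem_of_tendsto hconv (Filter.Eventually.of_forall hgH)
  · -- tendsto ⟹ proper
    intro htend hH
    rw [hH] at htend
    have heq : (fun i => Metric.diam
        ((fun x : InvLim T (Icc (s - s*s/2) (s/2)) => x.1 i) '' Set.univ))
        = fun _ : ℕ => s/2 - (s - s*s/2) := by
      funext i; rw [hall i, hdiamK]
    rw [heq] at htend
    have := tendsto_nhds_unique htend tendsto_const_nhds
    nlinarith
end

section
/- If the kneading map of a tent map does not tend to infinity (Q(k) ↛ ∞), then the core inverse limit X′ contains a folding point lying in a non-degenerate basic arc. -/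
open Set Filter Topology

def omegaSet (T : ℝ → ℝ) (c : ℝ) : Set ℝ :=
  {y | ∃ φ : ℕ → ℕ, StrictMono φ ∧
    Filter.Tendsto (fun n => T^[φ n] c) Filter.atTop (nhds y)}

/-- The basic arc of `x`: the closure of the set of points sharing the backward
itinerary of `x`. -/
def basicArcOf (T : ℝ → ℝ) (K : Set ℝ) (c : ℝ) (x : InvLim T K) : Set (InvLim T K) :=
  closure {y : InvLim T K | ∀ i, 1 ≤ i → y.1 i = c ∨ (c < y.1 i ↔ c < x.1 i)}

def SameSide (c x y : ℝ) : Prop := (x ≤ c ∧ y ≤ c) ∨ (c ≤ x ∧ c ≤ y)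

namespace SameSide

variable {c x y u : ℝ}

lemma refl (c x : ℝ) : SameSide c x x := (le_total x c).imp (fun h => ⟨h, h⟩) fun h => ⟨h, h⟩

lemma right_center (c x : ℝ) : SameSide c x c :=
  (le_total x c).imp (fun h => ⟨h, le_rfl⟩) fun h => ⟨h, le_rfl⟩

lemma of_notMem_uIcc (h : c ∉ uIcc x y) : SameSide c x y := by
  rw [mem_uIcc] at h
  unfold SameSide
  rcases le_total x c with hx | hx <;> rcases le_total y c with hy | hy <;> tauto

lemma of_mem_uIcc (hu : u ∈ uIcc x c) : SameSide c x u := by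
  rcases mem_uIcc.1 hu with ⟨hxu, huc⟩ | ⟨hcu, hux⟩
  · exact .inl ⟨hxu.trans huc, huc⟩
  · exact .inr ⟨hcu.trans hux, hcu⟩

lemma eq_or_lt_iff (h : SameSide c x y) (hx : x ≠ c) : y = c ∨ (c < y ↔ c < x) := by
  rcases eq_or_ne y c with hy | hy
  · exact .inl hy
  · rcases h with ⟨hxc, hyc⟩ | ⟨hcx, hcy⟩
    · exact .inr (iff_of_false hyc.not_gt hxc.not_gt)
    · exact .inr (iff_of_true (hcy.lt_of_ne' hy) (hcx.lt_of_ne' hx))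

lemma isClosed_setOf (c : ℝ) : IsClosed {p : ℝ × ℝ | SameSide c p.1 p.2} :=
  ((isClosed_le continuous_fst continuous_const).inter
    (isClosed_le continuous_snd continuous_const)).union
  ((isClosed_le continuous_const continuous_fst).inter
    (isClosed_le continuous_const continuous_snd))

end SameSide

structure IsUnimodal_s16 (T : ℝ → ℝ) (c : ℝ) : Prop where
  continuous : Continuous T
  monotoneOn : MonotoneOn T (Iic c)
  antitoneOn : AntitoneOn T (Ici c)

lemma IsUnimodal_s16.image_uIcc {T : ℝ → ℝ} {c u v : ℝ} (hT : IsUnimodal_s16 T c) (h : SameSide c u v) :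
    T '' uIcc u v = uIcc (T u) (T v) := by
  rcases h with ⟨hu, hv⟩ | ⟨hu, hv⟩
  · exact hT.continuous.continuousOn.image_uIcc_of_monotoneOn
      (hT.monotoneOn.mono (ordConnected_Iic.uIcc_subset hu hv))
  · exact hT.continuous.continuousOn.image_uIcc_of_antitoneOn
      (hT.antitoneOn.mono (ordConnected_Ici.uIcc_subset hu hv))

structure IsCuttingTimes (c : ℝ) (D : ℕ → Set ℝ) (S : ℕ → ℕ) : Prop where
  strictMono : StrictMono S
  zero : S 0 = 1
  mem_iff : ∀ n, 1 ≤ n → (c ∈ D n ↔ n ∈ range S)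

lemma IsCuttingTimes.one_le {c : ℝ} {D : ℕ → Set ℝ} {S : ℕ → ℕ} (hS : IsCuttingTimes c D S)
    (k : ℕ) : 1 ≤ S k :=
  hS.zero ▸ hS.strictMono.monotone k.zero_le

namespace IsHofbauerTower

variable {T : ℝ → ℝ} {c : ℝ} {D : ℕ → Set ℝ} {n : ℕ}

lemma iterate_mem (hD : IsHofbauerTower T c D) (hn : 1 ≤ n) : T^[n] c ∈ D n := by
  induction n, hn using Nat.le_induction with
  | base => simp [hD.one]
  | succ n hn ih =>
    by_cases hc : c ∈ D n
    · rw [hD.succ_of_mem n hn hc]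
      exact left_mem_uIcc
    · rw [hD.succ_of_notMem n hn hc, Function.iterate_succ_apply']
      exact mem_image_of_mem T ih

lemma ordConnected (hD : IsHofbauerTower T c D) (hT : Continuous T) (hn : 1 ≤ n) :
    (D n).OrdConnected := by
  induction n, hn using Nat.le_induction with
  | base => simpa [hD.one] using ordConnected_uIcc
  | succ n hn ih =>
    by_cases hc : c ∈ D n
    · rw [hD.succ_of_mem n hn hc]
      exact ordConnected_uIcc
    · rw [hD.succ_of_notMem n hn hc]
      exact (ih.isPreconnected.image T hT.continuousOn).ordConnected

lemma subset {K : Set ℝ} (hD : IsHofbauerTower T c D) (hK : K.OrdConnected) (hTK : MapsTo T K K)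
    (hcK : c ∈ K) (hn : 1 ≤ n) : D n ⊆ K := by
  induction n, hn using Nat.le_induction with
  | base => simpa [hD.one] using hK.uIcc_subset hcK (hTK hcK)
  | succ n hn ih =>
    by_cases hc : c ∈ D n
    · rw [hD.succ_of_mem n hn hc]
      exact hK.uIcc_subset (hTK.iterate _ hcK) (hTK hcK)
    · rw [hD.succ_of_notMem n hn hc]
      exact (hTK.mono_left ih).image_subset

lemma exists_preimage_sameSide (hD : IsHofbauerTower T c D) (hT : IsUnimodal_s16 T c) (hn : 1 ≤ n)
    {z : ℝ} (hz : z ∈ D (n + 1)) : ∃ u ∈ D n, T u = z ∧ SameSide c (T^[n] c) u := by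
  have hconn := hD.ordConnected hT.continuous hn
  have hmem := hD.iterate_mem hn
  by_cases hc : c ∈ D n
  · rw [hD.succ_of_mem n hn hc, Function.iterate_succ_apply',
      ← hT.image_uIcc (SameSide.right_center c _)] at hz
    obtain ⟨u, hu, rfl⟩ := hz
    exact ⟨u, hconn.uIcc_subset hmem hc hu, rfl, SameSide.of_mem_uIcc hu⟩
  · rw [hD.succ_of_notMem n hn hc] at hz
    obtain ⟨u, hu, rfl⟩ := hz
    exact ⟨u, hu, rfl, .of_notMem_uIcc fun h => hc (hconn.uIcc_subset hmem hu h)⟩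

lemma exists_backwardPath {K : Set ℝ} (hD : IsHofbauerTower T c D) (hT : IsUnimodal_s16 T c)
    (hDK : ∀ n, 1 ≤ n → D n ⊆ K) {m : ℕ} (hm : 1 ≤ m) {z : ℝ} (hz : z ∈ D m) :
    ∃ w : ℕ → ℝ, w 0 = z ∧ (∀ j, w j ∈ K) ∧ (∀ j, j + 1 < m → T (w (j + 1)) = w j) ∧
      ∀ j, 1 ≤ j → j < m → SameSide c (T^[m - j] c) (w j) := by
  -- Only the first `m` coordinates are constrained; the others just stay in `K`.
  induction m, hm using Nat.le_induction generalizing z with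
  | base => exact ⟨fun _ => z, rfl, fun _ => hDK 1 le_rfl hz, by omega, by omega⟩
  | succ m hm ih =>
    obtain ⟨u, hu, rfl, hside⟩ := hD.exists_preimage_sameSide hT hm hz
    obtain ⟨w, rfl, hwK, hwT, hwside⟩ := ih hu
    refine ⟨fun | 0 => T (w 0) | j + 1 => w j, rfl, ?_, ?_, ?_⟩
    · rintro (_ | j)
      exacts [hDK _ (by omega) hz, hwK j]
    · rintro (_ | j) hj
      exacts [rfl, hwT j (by omega)]
    · rintro (_ | (_ | j)) hj hjm
      · omega
      · exact hside
      · simpa using hwside (j + 1) (by omega) (by omega)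

lemma eq_uIcc_between_cuttingTimes (hD : IsHofbauerTower T c D) (hT : IsUnimodal_s16 T c)
    {S : ℕ → ℕ} (hS : IsCuttingTimes c D S) (k : ℕ) {t : ℕ} (ht : 1 ≤ t)
    (htk : S k + t ≤ S (k + 1)) : D (S k + t) = uIcc (T^[S k + t] c) (T^[t] c) := by
  induction t, ht using Nat.le_induction with
  | base =>
    rw [hD.succ_of_mem _ (hS.one_le k) ((hS.mem_iff _ (hS.one_le k)).2 ⟨k, rfl⟩),
      Function.iterate_one]
  | succ t ht ih =>
    have hc : c ∉ D (S k + t) := by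
      rintro hc
      obtain ⟨j, hj⟩ := (hS.mem_iff _ (by omega)).1 hc
      have hkj : k < j := hS.strictMono.lt_iff_lt.1 (by omega)
      have hjk : j < k + 1 := hS.strictMono.lt_iff_lt.1 (by omega)
      omega
    have hDt := ih (by omega)
    rw [← add_assoc, hD.succ_of_notMem _ (by omega) hc, hDt,
      hT.image_uIcc (.of_notMem_uIcc (hDt ▸ hc)), ← Function.iterate_succ_apply' T,
      ← Function.iterate_succ_apply' T]

lemma eq_uIcc_of_kneading (hD : IsHofbauerTower T c D) (hT : IsUnimodal_s16 T c) {S Q : ℕ → ℕ}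
    (hS : IsCuttingTimes c D S) (hQ : ∀ k, 1 ≤ k → S k = S (k - 1) + S (Q k)) {k : ℕ}
    (hk : 1 ≤ k) : D (S k) = uIcc (T^[S k] c) (T^[S (Q k)] c) := by
  obtain ⟨k, rfl⟩ := Nat.exists_eq_add_of_le' hk
  have hSk : S (k + 1) = S k + S (Q (k + 1)) := by simpa using hQ _ hk
  rw [hSk]
  exact hD.eq_uIcc_between_cuttingTimes hT hS k (hS.one_le _) hSk.ge

end IsHofbauerTower

def tent (s x : ℝ) : ℝ := min (s * x) (s * (1 - x))

section Tent

variable {s x : ℝ}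

lemma tent_of_le_half (hs : 0 ≤ s) (hx : x ≤ 1 / 2) : tent s x = s * x :=
  min_eq_left (by nlinarith)

lemma tent_of_half_le (hs : 0 ≤ s) (hx : 1 / 2 ≤ x) : tent s x = s * (1 - x) :=
  min_eq_right (by nlinarith)

lemma isUnimodal_tent (hs : 0 ≤ s) : IsUnimodal_s16 (tent s) (1 / 2) where
  continuous := by unfold tent; fun_prop
  monotoneOn x hx y hy hxy := by
    rw [tent_of_le_half hs hx, tent_of_le_half hs hy]
    exact mul_le_mul_of_nonneg_left hxy hs
  antitoneOn x hx y hy hxy := by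
    rw [tent_of_half_le hs hx, tent_of_half_le hs hy]
    exact mul_le_mul_of_nonneg_left (by linarith) hs

lemma tent_half (hs : 0 ≤ s) : tent s (1 / 2) = s / 2 := by
  rw [tent_of_le_half hs le_rfl]; ring

lemma tent_iterate_two_half (hs : 1 ≤ s) : (tent s)^[2] (1 / 2) = s * (1 - s / 2) := by
  rw [Function.iterate_succ_apply', Function.iterate_one, tent_half (by linarith),
    tent_of_half_le (by linarith) (by linarith)]

lemma half_mem_tent_core (hs1 : 1 ≤ s) :
    1 / 2 ∈ Icc ((tent s)^[2] (1 / 2)) (tent s (1 / 2)) := by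
  rw [tent_iterate_two_half hs1, tent_half (by linarith)]
  constructor <;> nlinarith

lemma mapsTo_tent_core (hs1 : 1 ≤ s) (hs2 : s ≤ 2) :
    MapsTo (tent s) (Icc ((tent s)^[2] (1 / 2)) (tent s (1 / 2)))
      (Icc ((tent s)^[2] (1 / 2)) (tent s (1 / 2))) := by
  intro x hx
  rw [tent_iterate_two_half hs1, tent_half (by linarith), mem_Icc] at hx ⊢
  rcases le_total x (1 / 2) with h | h
  · rw [tent_of_le_half (by linarith) h]
    constructor <;> nlinarith
  · rw [tent_of_half_le (by linarith) h]
    constructor <;> nlinarith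

end Tent

lemma exists_frequently_eq_of_not_tendsto_atTop {α : Type*} {l : Filter α} {Q : α → ℕ}
    (h : ¬ Tendsto Q l atTop) : ∃ q, ∃ᶠ k in l, Q k = q := by
  contrapose! h
  refine tendsto_atTop.2 fun b => ?_
  filter_upwards [(eventually_all_finset (Finset.range b)).2 fun q _ => h q] with k hk
  by_contra! hkb
  exact hk (Q k) (Finset.mem_range.2 hkb) rfl

lemma mem_omegaSet_of_tendsto {T : ℝ → ℝ} {c y : ℝ} {m : ℕ → ℕ} (hm : StrictMono m) (j : ℕ)
    (h : Tendsto (fun i => T^[m i - j] c) atTop (𝓝 y)) : y ∈ omegaSet T c := by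
  refine ⟨fun t => m (t + j) - j, fun a b hab => ?_, h.comp (tendsto_add_atTop_nat j)⟩
  have h1 : a + j ≤ m (a + j) := hm.id_le _
  have h2 := hm (show a + j < b + j by omega)
  show m (a + j) - j < m (b + j) - j
  omega

lemma apply_succ_eq_of_tendsto {T : ℝ → ℝ} (hT : Continuous T) {u : ℕ → ℕ → ℝ} {U : ℕ → ℝ}
    (hu : ∀ j, Tendsto (fun i => u i j) atTop (𝓝 (U j)))
    (h : ∀ j, ∀ᶠ i in atTop, T (u i (j + 1)) = u i j) (j : ℕ) : T (U (j + 1)) = U j :=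
  tendsto_nhds_unique (((hT.tendsto _).comp (hu (j + 1))).congr' (h j)) (hu j)

namespace InvLim

variable {T : ℝ → ℝ} {K : Set ℝ} {c : ℝ}

def shift (x : InvLim T K) (k : ℕ) : InvLim T K :=
  ⟨fun n => x.1 (n + k), fun n => x.2.1 _, fun n => by
    show T (x.1 (n + 1 + k)) = x.1 (n + k)
    rw [add_right_comm]
    exact x.2.2 _⟩

lemma iterate_apply_add (x : InvLim T K) (n t : ℕ) : T^[t] (x.1 (n + t)) = x.1 n := by
  induction t with
  | zero => rfl
  | succ t ih => rw [Function.iterate_succ_apply, ← add_assoc, x.2.2, ih]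

lemma exists_shift_ne (hnc : ∀ n, 1 ≤ n → T^[n] c ≠ c) (x : InvLim T K) :
    ∃ k, ∀ i, 1 ≤ i → x.1 (i + k) ≠ c := by
  by_cases h : ∃ k, 1 ≤ k ∧ x.1 k = c
  · obtain ⟨k, -, hk⟩ := h
    refine ⟨k, fun i hi hxi => hnc i hi ?_⟩
    have h := x.iterate_apply_add k i
    rwa [add_comm k i, hxi, hk] at h
  · push Not at h
    exact ⟨0, h⟩

end InvLim

lemma mem_basicArcOf_of_sameSide {T : ℝ → ℝ} {K : Set ℝ} {c : ℝ} {x y : InvLim T K}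
    (hx : ∀ i, 1 ≤ i → x.1 i ≠ c) (h : ∀ i, 1 ≤ i → SameSide c (x.1 i) (y.1 i)) :
    y ∈ basicArcOf T K c x :=
  subset_closure fun i hi => (h i hi).eq_or_lt_iff (hx i hi)

theorem exists_not_subsingleton_basicArcOf {T : ℝ → ℝ} {K : Set ℝ} {c : ℝ}
    (hnc : ∀ n, 1 ≤ n → T^[n] c ≠ c) (x y : InvLim T K) (hx : ∀ n, x.1 n ∈ omegaSet T c)
    (hxy : x.1 0 ≠ y.1 0) (hside : ∀ j, 1 ≤ j → SameSide c (x.1 j) (y.1 j)) :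
    ∃ x ∈ {x : InvLim T K | ∀ n, x.1 n ∈ omegaSet T c}, ¬ (basicArcOf T K c x).Subsingleton := by
  obtain ⟨k, hk⟩ := x.exists_shift_ne hnc
  refine ⟨x.shift k, fun n => hx _, fun hsub => hxy ?_⟩
  have hxk : x.shift k = y.shift k :=
    hsub (mem_basicArcOf_of_sameSide hk fun i _ => .refl c _)
      (mem_basicArcOf_of_sameSide hk fun i hi => hside _ (by omega))
  calc x.1 0 = T^[k] ((x.shift k).1 0) := (x.iterate_apply_add 0 k).symm
    _ = T^[k] ((y.shift k).1 0) := by rw [hxk]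
    _ = y.1 0 := y.iterate_apply_add 0 k

theorem exists_invLim_sameSide_of_backwardPaths {T : ℝ → ℝ} (hT : Continuous T) {K : Set ℝ}
    (hK : IsCompact K) {c a : ℝ} (hac : a ≠ c) (horb : ∀ n, T^[n] c ∈ K) {m : ℕ → ℕ}
    (hm : StrictMono m) (z : ℕ → ℕ → ℝ) (hzK : ∀ i j, z i j ∈ K) (hz0 : ∀ i, z i 0 = a)
    (hzT : ∀ i j, j + 1 < m i → T (z i (j + 1)) = z i j)
    (hside : ∀ i j, 1 ≤ j → j < m i → SameSide c (T^[m i - j] c) (z i j))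
    (hopp : ∀ i, c ∈ uIcc (T^[m i] c) a) :
    ∃ x y : InvLim T K, (∀ n, x.1 n ∈ omegaSet T c) ∧ x.1 0 ≠ y.1 0 ∧
      ∀ j, 1 ≤ j → SameSide c (x.1 j) (y.1 j) := by
  -- For `j ≥ m i` the truncated subtraction makes the `j`-th coordinate `c`, so the first
  -- sequence is not a backward orbit; at each fixed `j` it eventually is.
  have hKω : IsCompact (univ.pi fun _ : ℕ => K) := isCompact_univ_pi fun _ => hK
  obtain ⟨⟨X, Y⟩, ⟨hXK, hYK⟩, φ, hφ, hconv⟩ :=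
    (hKω.prod hKω).tendsto_subseq (x := fun i => (fun j => T^[m i - j] c, z i))
      fun i => ⟨fun j _ => horb _, fun j _ => hzK i j⟩
  have hX : ∀ j, Tendsto (fun i => T^[m (φ i) - j] c) atTop (𝓝 (X j)) := fun j =>
    ((continuous_apply j).tendsto _).comp ((continuous_fst.tendsto _).comp hconv)
  have hY : ∀ j, Tendsto (fun i => z (φ i) j) atTop (𝓝 (Y j)) := fun j =>
    ((continuous_apply j).tendsto _).comp ((continuous_snd.tendsto _).comp hconv)
  have hlarge : ∀ j, ∀ᶠ i in atTop, j < m (φ i) := fun j =>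
    (hm.comp hφ).tendsto_atTop.eventually_gt_atTop j
  have hXT : ∀ j, T (X (j + 1)) = X j := apply_succ_eq_of_tendsto hT hX fun j =>
    (hlarge (j + 1)).mono fun i hi => by
      rw [show m (φ i) - j = m (φ i) - (j + 1) + 1 by omega, Function.iterate_succ_apply']
  have hYT : ∀ j, T (Y (j + 1)) = Y j := apply_succ_eq_of_tendsto hT hY fun j =>
    (hlarge (j + 1)).mono fun i hi => hzT _ _ hi
  refine ⟨⟨X, fun j => hXK j trivial, hXT⟩, ⟨Y, fun j => hYK j trivial, hYT⟩,
    fun j => mem_omegaSet_of_tendsto (hm.comp hφ) j (hX j), fun hXY => hac ?_,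
    fun j hj => (SameSide.isClosed_setOf c).mem_of_tendsto ((hX j).prodMk_nhds (hY j))
      ((hlarge j).mono fun i hi => hside _ _ hj hi)⟩
  have hY0 : Y 0 = a := tendsto_nhds_unique (hY 0) (by simp only [hz0]; exact tendsto_const_nhds)
  have hclosed : IsClosed {x : ℝ | c ∈ uIcc x a} := by
    simp only [uIcc, mem_Icc, ofPred_and]
    exact (isClosed_le (by fun_prop) continuous_const).inter
      (isClosed_le continuous_const (by fun_prop))
  have hc : c ∈ uIcc (X 0) a := hclosed.mem_of_tendsto (hX 0) (.of_forall fun i => hopp (φ i))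
  rwa [show X 0 = a from hXY.trans hY0, uIcc_self, mem_singleton_iff, eq_comm] at hc

theorem stmt16_general (s : ℝ) (hs : s ∈ Set.Ioc (Real.sqrt 2) 2) (T : ℝ → ℝ)
    (hT : ∀ x, T x = min (s * x) (s * (1 - x))) (c : ℝ) (hc : c = 1/2)
    (hnc : ∀ n, 1 ≤ n → T^[n] c ≠ c)
    (D : ℕ → Set ℝ)
    (hD1 : D 1 = Set.uIcc c (T c))
    (hDcut : ∀ n, 1 ≤ n → c ∈ D n → D (n + 1) = Set.uIcc (T^[n+1] c) (T c))
    (hDnot : ∀ n, 1 ≤ n → c ∉ D n → D (n + 1) = T '' D n)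
    (S : ℕ → ℕ) (hS : StrictMono S) (hS0 : S 0 = 1)
    (hSrange : ∀ n, 1 ≤ n → (c ∈ D n ↔ n ∈ Set.range S))
    (Q : ℕ → ℕ) (hQ : ∀ k, 1 ≤ k → S k = S (k - 1) + S (Q k))
    (hQninf : ¬ Filter.Tendsto Q Filter.atTop Filter.atTop)
    (K : Set ℝ) (hK : K = Set.Icc (T^[2] c) (T c))
    (F : Set (InvLim T K))
    (hF : F = {x : InvLim T K | ∀ n, x.1 n ∈ omegaSet T c}) :
    ∃ x ∈ F, ¬ (basicArcOf T K c x).Subsingleton := by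
  subst hc hK hF
  obtain rfl : T = tent s := funext hT
  have hs1 : 1 ≤ s := (Real.one_lt_sqrt_two.trans hs.1).le
  have hU := isUnimodal_tent (by linarith : 0 ≤ s)
  have hD : IsHofbauerTower (tent s) (1 / 2) D := ⟨hD1, hDcut, hDnot⟩
  have hSc : IsCuttingTimes (1 / 2) D S := ⟨hS, hS0, hSrange⟩
  have hcore := mapsTo_tent_core hs1 hs.2
  have hhalf := half_mem_tent_core hs1
  obtain ⟨q, hq⟩ := exists_frequently_eq_of_not_tendsto_atTop hQninf
  obtain ⟨k, hk, hkq⟩ := extraction_of_frequently_atTop (hq.and_eventually (eventually_ge_atTop 1))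
  have hDk : ∀ i, D (S (k i)) = uIcc ((tent s)^[S (k i)] (1 / 2)) ((tent s)^[S q] (1 / 2)) :=
    fun i => by rw [hD.eq_uIcc_of_kneading hU hSc hQ (hkq i).2, (hkq i).1]
  have hcDk : ∀ i, 1 / 2 ∈ D (S (k i)) := fun i => (hSc.mem_iff _ (hSc.one_le _)).2 ⟨_, rfl⟩
  choose z hz0 hzK hzT hzside using fun i =>
    hD.exists_backwardPath hU (fun n hn => hD.subset ordConnected_Icc hcore hhalf hn)
      (hSc.one_le (k i)) (hDk i ▸ right_mem_uIcc)
  obtain ⟨x, y, hxω, hxy, hside⟩ := exists_invLim_sameSide_of_backwardPaths hU.continuous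
    isCompact_Icc (hnc _ (hSc.one_le q)) (fun n => hcore.iterate n hhalf)
    (hSc.strictMono.comp hk) z hzK hz0 hzT hzside fun i => hDk i ▸ hcDk i
  exact exists_not_subsingleton_basicArcOf hnc x y hxω hxy hside

/-- If the kneading map of a tent map does not tend to infinity, then
the core inverse limit `X′` contains a folding point lying in a non-degenerate basic
arc. -/
theorem stmt16 (s : ℝ) (hs : s ∈ Set.Ioc (Real.sqrt 2) 2) (T : ℝ → ℝ)
    (hT : ∀ x, T x = min (s * x) (s * (1 - x))) (c : ℝ) (hc : c = 1/2)
    (hnc : ∀ n, 1 ≤ n → T^[n] c ≠ c)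
    (hinf : Function.Injective fun n : ℕ => T^[n] c)
    (D : ℕ → Set ℝ)
    (hD1 : D 1 = Set.uIcc c (T c))
    (hDcut : ∀ n, 1 ≤ n → c ∈ D n → D (n + 1) = Set.uIcc (T^[n+1] c) (T c))
    (hDnot : ∀ n, 1 ≤ n → c ∉ D n → D (n + 1) = T '' D n)
    (S : ℕ → ℕ) (hS : StrictMono S) (hS0 : S 0 = 1)
    (hSrange : ∀ n, 1 ≤ n → (c ∈ D n ↔ n ∈ Set.range S))
    (Q : ℕ → ℕ) (hQ : ∀ k, 1 ≤ k → S k = S (k - 1) + S (Q k))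
    (hQninf : ¬ Filter.Tendsto Q Filter.atTop Filter.atTop)
    (K : Set ℝ) (hK : K = Set.Icc (T^[2] c) (T c))
    (F : Set (InvLim T K))
    (hF : F = {x : InvLim T K | ∀ n, x.1 n ∈ omegaSet T c}) :
    ∃ x ∈ F, ¬ (basicArcOf T K c x).Subsingleton :=
  stmt16_general s hs T hT c hc hnc D hD1 hDcut hDnot S hS hS0 hSrange Q hQ hQninf K hK F hF
end
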